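/- arXiv:2012.00947 — 5 statements merged into one kernel-verified Lean document; each statement's English description precedes it below -/
import Mathlib

section
/- Let π be a group and κ a normal subgroup of π that is amenable, i.e. κ admits a right-invariant mean. Let p : π → π/κ be the quotient homomorphism. Then for every n ∈ ℕ, the pullback along p (precomposing bounded group cochains with p in each coordinate) induces a linear bijection from the bounded cohomology Ĥ_b^n(π/κ) onto Ĥ_b^n(π) which preserves the quotient seminorms, i.e. ‖p^{**}(α)‖ = ‖α‖ for every class α. (This is Theorem B of the paper: the map Bp : Bπ → B(π/κ) of classifying spaces induces an isometric isomorphism in bounded cohomology; the bounded simplicial cochain complex of the nerve Bπ of a group is exactly the bounded inhomogeneous group cochain complex.) -/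
/-!
Iterating a right-invariant mean of `κ` over the coordinates averages homogeneous cochains of `π`
over `κ`-cosets. This descends to a transfer `Ĉ_b(π) → Ĉ_b(π/κ)`: a chain map that does not
increase sup norms and is left inverse to the pullback. In the other order, pullback after
transfer is the coset-averaging operator, and it is chain homotopic to the identity through an
equivariant bounded homotopy. So the pullback is bijective on bounded cohomology, and its inverse,
like the pullback itself, does not increase the quotient seminorm: the pullback is an isometry.
-/

/-- A real-valued function is bounded. -/
def IsBdd {X : Type*} (f : X → ℝ) : Prop := ∃ C : ℝ, ∀ x, |f x| ≤ C

/-- The sup norm of a real valued function. -/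
noncomputable def supN {X : Type*} (f : X → ℝ) : ℝ := ⨆ x, |f x|

/-- The space of bounded real-valued functions on `X`, as a submodule of `X → ℝ`. -/
def bddFns (X : Type*) : Submodule ℝ (X → ℝ) where
  carrier := {f | IsBdd f}
  add_mem' := by
    rintro f g ⟨C, hC⟩ ⟨D, hD⟩
    exact ⟨C + D, fun x => (abs_add_le _ _).trans (add_le_add (hC x) (hD x))⟩
  zero_mem' := ⟨0, fun x => by simp⟩
  smul_mem' := by
    rintro r f ⟨C, hC⟩
    refine ⟨|r| * C, fun x => ?_⟩
    rw [Pi.smul_apply, smul_eq_mul, abs_mul]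
    exact mul_le_mul_of_nonneg_left (hC x) (abs_nonneg r)

lemma const_mem_bddFns (X : Type*) (r : ℝ) : (fun _ : X => r) ∈ bddFns X :=
  ⟨|r|, fun _ => le_rfl⟩

lemma translate_mem_bddFns {G : Type*} [Group G] (g : G) (f : ↥(bddFns G)) :
    (fun x => (f : G → ℝ) (x * g)) ∈ bddFns G := by
  obtain ⟨C, hC⟩ := f.2
  exact ⟨C, fun x => hC (x * g)⟩

/-- A right-invariant mean on a group `G`: a linear functional on the space of bounded
real-valued functions on `G`, of operator norm at most `1`, sending each constant function
to its value, and invariant under right translations. -/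
def IsRightInvariantMean (G : Type*) [Group G] (μ : ↥(bddFns G) →ₗ[ℝ] ℝ) : Prop :=
  (∀ f : ↥(bddFns G), |μ f| ≤ supN (f : G → ℝ)) ∧
  (∀ r : ℝ, μ ⟨fun _ => r, const_mem_bddFns G r⟩ = r) ∧
  (∀ (g : G) (f : ↥(bddFns G)), μ ⟨fun x => (f : G → ℝ) (x * g), translate_mem_bddFns g f⟩ = μ f)

/-- A group is amenable if it admits a right-invariant mean. -/
def Amenable (G : Type*) [Group G] : Prop := ∃ μ, IsRightInvariantMean G μ

/-- The `i`-th face of an `(n+1)`-tuple of group elements: for `i = 0` drop the first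
entry, for `i = n+1` drop the last entry, and for `0 < i < n+1` multiply the `i`-th and
`(i+1)`-st entries. -/
def tface {G : Type*} [Group G] {n : ℕ} (i : Fin (n + 2)) (g : Fin (n + 1) → G)
    (j : Fin n) : G :=
  if (j : ℕ) + 1 < (i : ℕ) then g j.castSucc
  else if (j : ℕ) + 1 = (i : ℕ) then g j.castSucc * g j.succ
  else g j.succ

/-- The inhomogeneous coboundary operator on group cochains:
`d f (g₁, …, g_{n+1}) = f(g₂, …, g_{n+1}) + ∑_{i=1}^{n} (-1)^i f(g₁, …, g_i g_{i+1}, …, g_{n+1})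
  + (-1)^{n+1} f (g₁, …, g_n)`. -/
noncomputable def dGrp (G : Type*) [Group G] (n : ℕ) :
    ((Fin n → G) → ℝ) →ₗ[ℝ] ((Fin (n + 1) → G) → ℝ) where
  toFun f := fun g => ∑ i : Fin (n + 2), (-1 : ℝ) ^ (i : ℕ) * f (tface i g)
  map_add' f g := by
    funext y
    simp only [Pi.add_apply, mul_add]
    rw [Finset.sum_add_distrib]
  map_smul' r f := by
    funext y
    simp only [Pi.smul_apply, smul_eq_mul, RingHom.id_apply, Finset.mul_sum]
    exact Finset.sum_congr rfl fun i _ => by ring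

/-- Bounded `n`-cocycles of `G`. -/
noncomputable def cocycles (G : Type*) [Group G] (n : ℕ) :
    Submodule ℝ ((Fin n → G) → ℝ) :=
  bddFns (Fin n → G) ⊓ LinearMap.ker (dGrp G n)

/-- Coboundaries of bounded cochains ( `0` in degree `0`). -/
noncomputable def coboundaries (G : Type*) [Group G] :
    ∀ n : ℕ, Submodule ℝ ((Fin n → G) → ℝ)
  | 0 => ⊥
  | (n + 1) => (bddFns (Fin n → G)).map (dGrp G n)

/-- The quotient seminorm on the bounded cohomology
`Ĥ_b^n(G) = cocycles / coboundaries`: `‖α‖ = inf { ‖z‖_∞ : z a bounded cocycle representing α }`,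
i.e. `‖[c]‖ = inf_b ‖c + d b‖_∞`. -/
noncomputable def qnorm (G : Type*) [Group G] (n : ℕ)
    (α : ↥(cocycles G n) ⧸ (coboundaries G n).comap (cocycles G n).subtype) : ℝ :=
  sInf {r : ℝ | ∃ z : ↥(cocycles G n),
    Submodule.Quotient.mk z = α ∧ r = supN (z : (Fin n → G) → ℝ)}

/-- Pullback of cochains along a map `p : G → Q`, precomposing with `p` in each coordinate. -/
def pullCochain {G Q : Type*} (p : G → Q) (n : ℕ) :
    ((Fin n → Q) → ℝ) →ₗ[ℝ] ((Fin n → G) → ℝ) where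
  toFun f := fun g => f fun j => p (g j)
  map_add' _ _ := rfl
  map_smul' _ _ := rfl

open Function

lemma Fin.removeNth_succ_cons {α : Type*} {n : ℕ} (i : Fin (n + 1)) (b : α)
    (x : Fin (n + 1) → α) :
    i.succ.removeNth (Fin.cons b x : Fin (n + 2) → α) = Fin.cons b (i.removeNth x) :=
  Fin.cons_comp_succ_succAbove b x i

section SupNorm

variable {X : Type*}

lemma supN_le [Nonempty X] {f : X → ℝ} {C : ℝ} (h : ∀ x, |f x| ≤ C) : supN f ≤ C :=
  ciSup_le h

lemma abs_le_supN {f : X → ℝ} (hf : IsBdd f) (x : X) : |f x| ≤ supN f := by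
  obtain ⟨C, hC⟩ := hf
  exact le_ciSup ⟨C, by rintro _ ⟨y, rfl⟩; exact hC y⟩ x

lemma supN_nonneg [Nonempty X] (f : X → ℝ) : 0 ≤ supN f := by
  by_cases h : BddAbove (Set.range fun x => |f x|)
  · exact (abs_nonneg _).trans (le_ciSup h (Classical.arbitrary X))
  · rw [supN, iSup, Real.sSup_of_not_bddAbove h]

end SupNorm

/-- A right-invariant mean extended linearly, in an arbitrary way, from the bounded functions to
all of `K → ℝ`; the extension lets iterated means be built without boundedness side conditions. -/
structure LinearMean (K : Type*) [Group K] where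
  toLinearMap : (K → ℝ) →ₗ[ℝ] ℝ
  abs_le : ∀ (f : K → ℝ) (C : ℝ), (∀ k, |f k| ≤ C) → |toLinearMap f| ≤ C
  map_const : ∀ r : ℝ, toLinearMap (fun _ => r) = r
  map_mul_right : ∀ f : K → ℝ, IsBdd f → ∀ c : K, toLinearMap (fun k => f (k * c)) = toLinearMap f

theorem Amenable.nonempty_linearMean {K : Type*} [Group K] (h : Amenable K) :
    Nonempty (LinearMean K) := by
  obtain ⟨μ, hμ_le, hμ_const, hμ_mul⟩ := h
  obtain ⟨ν, hν⟩ := LinearMap.exists_extend μ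
  have hν_apply (f : K → ℝ) (hf : IsBdd f) : ν f = μ ⟨f, hf⟩ :=
    LinearMap.congr_fun hν ⟨f, hf⟩
  refine ⟨⟨ν, fun f C hC => ?_, fun r => ?_, fun f hf c => ?_⟩⟩
  · rw [hν_apply f ⟨C, hC⟩]
    exact (hμ_le _).trans (supN_le hC)
  · rw [hν_apply _ (const_mem_bddFns K r)]
    exact hμ_const r
  · rw [hν_apply f hf, hν_apply _ (translate_mem_bddFns c ⟨f, hf⟩)]
    exact hμ_mul c ⟨f, hf⟩

namespace LinearMean

variable {K : Type*} [Group K] (m : LinearMean K)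

/-- The iterated mean `m(k₀ ↦ m(k₁ ↦ ⋯ m(kⱼ₋₁ ↦ f k)))` on `Kʲ`. -/
noncomputable def iter : ∀ j : ℕ, ((Fin j → K) → ℝ) →ₗ[ℝ] ℝ
  | 0 => LinearMap.proj finZeroElim
  | j + 1 => m.toLinearMap ∘ₗ LinearMap.pi fun k =>
      iter j ∘ₗ LinearMap.funLeft ℝ ℝ fun ks : Fin j → K => (Fin.cons k ks : Fin (j + 1) → K)

lemma iter_zero_apply (f : (Fin 0 → K) → ℝ) (k : Fin 0 → K) : m.iter 0 f = f k := by
  rw [Subsingleton.elim k finZeroElim]; rfl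

lemma iter_succ_apply (j : ℕ) (f : (Fin (j + 1) → K) → ℝ) :
    m.iter (j + 1) f = m.toLinearMap (fun k => m.iter j fun ks => f (Fin.cons k ks)) := rfl

lemma abs_iter_le {j : ℕ} {f : (Fin j → K) → ℝ} {C : ℝ} (hf : ∀ k, |f k| ≤ C) :
    |m.iter j f| ≤ C := by
  induction j with
  | zero => simpa [m.iter_zero_apply f finZeroElim] using hf _
  | succ j ih => exact m.abs_le _ _ fun k => ih fun ks => hf _

lemma iter_const (j : ℕ) (r : ℝ) : m.iter j (fun _ => r) = r := by
  induction j with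
  | zero => rfl
  | succ j ih => simp only [iter_succ_apply, ih, m.map_const]

lemma iter_mul_right {j : ℕ} {f : (Fin j → K) → ℝ} (hf : IsBdd f) (c : Fin j → K) :
    m.iter j (fun k => f (k * c)) = m.iter j f := by
  induction j with
  | zero => rw [m.iter_zero_apply _ finZeroElim, m.iter_zero_apply f (finZeroElim * c)]
  | succ j ih =>
    obtain ⟨C, hC⟩ := hf
    have h : ∀ k, m.iter j (fun ks => f (Fin.cons k ks * c)) =
        m.iter j (fun ks => f (Fin.cons (k * c 0) ks)) := fun k => by
      rw [← ih (f := fun ks => f (Fin.cons (k * c 0) ks)) ⟨C, fun _ => hC _⟩ (Fin.tail c)]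
      congr 2; ext ks; congr 1; ext i; exact Fin.cases rfl (fun i => rfl) i
    rw [iter_succ_apply, iter_succ_apply, funext h]
    exact m.map_mul_right (fun k => m.iter j fun ks => f (Fin.cons k ks))
      ⟨C, fun k => m.abs_iter_le fun _ => hC _⟩ (c 0)

lemma iter_comp_removeNth {j : ℕ} (i : Fin (j + 1)) (f : (Fin j → K) → ℝ) :
    m.iter (j + 1) (fun k => f (i.removeNth k)) = m.iter j f := by
  induction j with
  | zero =>
    simp only [iter_succ_apply, m.iter_zero_apply _ finZeroElim,
      Subsingleton.elim _ (finZeroElim : Fin 0 → K), m.map_const]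
  | succ j ih =>
    rw [iter_succ_apply]
    cases i using Fin.cases with
    | zero => simp only [Fin.removeNth_zero, Fin.tail_cons, m.map_const]
    | succ i =>
      rw [iter_succ_apply m j f]
      refine congrArg m.toLinearMap (funext fun k => ?_)
      rw [← ih i]
      exact congrArg (m.iter (j + 1)) (funext fun ks => congrArg f (Fin.removeNth_succ_cons i k ks))

end LinearMean

section Homogeneous

variable {X : Type*}

/-- Here `C^j = (Xʲ → ℝ)` has `j` variables, so `dHomog X 0 : ℝ → C^1` is the augmentation. -/
noncomputable def dHomog (X : Type*) (j : ℕ) :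
    ((Fin j → X) → ℝ) →ₗ[ℝ] ((Fin (j + 1) → X) → ℝ) where
  toFun F x := ∑ i : Fin (j + 1), (-1 : ℝ) ^ (i : ℕ) * F (i.removeNth x)
  map_add' F F' := by ext x; simp [mul_add, Finset.sum_add_distrib]
  map_smul' c F := by ext x; simp [Finset.mul_sum, mul_left_comm]

lemma dHomog_apply (j : ℕ) (F : (Fin j → X) → ℝ) (x : Fin (j + 1) → X) :
    dHomog X j F x = ∑ i : Fin (j + 1), (-1 : ℝ) ^ (i : ℕ) * F (i.removeNth x) := rfl

def coneAt {j : ℕ} (b : X) : ((Fin (j + 1) → X) → ℝ) →ₗ[ℝ] ((Fin j → X) → ℝ) :=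
  LinearMap.funLeft ℝ ℝ fun x => Fin.cons b x

lemma coneAt_apply {j : ℕ} (b : X) (H : (Fin (j + 1) → X) → ℝ) (x : Fin j → X) :
    coneAt b H x = H (Fin.cons b x) := rfl

lemma coneAt_dHomog {j : ℕ} (b : X) (H : (Fin (j + 1) → X) → ℝ) :
    coneAt b (dHomog X (j + 1) H) = H - dHomog X j (coneAt b H) := by
  ext x
  simp only [coneAt_apply, dHomog_apply, Fin.sum_univ_succ (n := j + 1), Fin.removeNth_zero,
    Fin.tail_cons, Fin.val_zero, pow_zero, one_mul, Fin.val_succ, pow_succ, Pi.sub_apply]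
  rw [sub_eq_add_neg, ← Finset.sum_neg_distrib]
  congr 1
  refine Finset.sum_congr rfl fun i _ => ?_
  rw [Fin.removeNth_succ_cons]
  ring

lemma dHomog_dHomog (j : ℕ) (F : (Fin j → X) → ℝ) : dHomog X (j + 1) (dHomog X j F) = 0 := by
  induction j with
  | zero =>
    ext x
    simp [dHomog_apply, Fin.sum_univ_two, Subsingleton.elim _ (finZeroElim : Fin 0 → X)]
  | succ j ih =>
    ext x
    have h : coneAt (x 0) (dHomog X (j + 2) (dHomog X (j + 1) F)) = 0 := by
      rw [coneAt_dHomog, coneAt_dHomog, map_sub, ih, sub_zero, sub_self]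
    simpa [coneAt_apply] using congrFun h (Fin.tail x)

lemma abs_dHomog_le {j : ℕ} {F : (Fin j → X) → ℝ} {C : ℝ} (hF : ∀ x, |F x| ≤ C)
    (x : Fin (j + 1) → X) : |dHomog X j F x| ≤ (j + 1) * C := by
  rw [dHomog_apply]
  calc _ ≤ ∑ i : Fin (j + 1), |(-1 : ℝ) ^ (i : ℕ) * F (i.removeNth x)| :=
        Finset.abs_sum_le_sum_abs _ _
    _ ≤ ∑ _i : Fin (j + 1), C := Finset.sum_le_sum fun i _ => by simpa [abs_mul] using hF _
    _ = (j + 1) * C := by simp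

def IsDiagInvariant {G : Type*} [Group G] {j : ℕ} (F : (Fin j → G) → ℝ) : Prop :=
  ∀ (g : G) (x : Fin j → G), F (g • x) = F x

lemma dHomog_comp_smul {G : Type*} [Group G] {j : ℕ} (F : (Fin j → G) → ℝ) (g : G) :
    dHomog G j (fun x => F (g • x)) = fun x => dHomog G j F (g • x) := rfl

lemma pullCochain_dHomog {Y : Type*} (p : X → Y) (j : ℕ) (V : (Fin j → Y) → ℝ) :
    pullCochain p (j + 1) (dHomog Y j V) = dHomog X j (pullCochain p j V) := rfl

end Homogeneous

section Averaging

variable {G : Type*} [Group G] (N : Subgroup G) (m : LinearMean N)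

noncomputable def quotAvg (j : ℕ) : ((Fin j → G) → ℝ) →ₗ[ℝ] ((Fin j → G ⧸ N) → ℝ) :=
  LinearMap.pi fun y => m.iter j ∘ₗ LinearMap.funLeft ℝ ℝ fun k i => (y i).out * ((k i : G))⁻¹

lemma quotAvg_apply {j : ℕ} (F : (Fin j → G) → ℝ) (y : Fin j → G ⧸ N) :
    quotAvg N m j F y = m.iter j (fun k => F fun i => (y i).out * ((k i : G))⁻¹) := rfl

lemma abs_quotAvg_le {j : ℕ} {F : (Fin j → G) → ℝ} {C : ℝ} (hF : ∀ x, |F x| ≤ C)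
    (y : Fin j → G ⧸ N) : |quotAvg N m j F y| ≤ C :=
  m.abs_iter_le fun _ => hF _

lemma quotAvg_dHomog {j : ℕ} (F : (Fin j → G) → ℝ) :
    quotAvg N m (j + 1) (dHomog G j F) = dHomog (G ⧸ N) j (quotAvg N m j F) := by
  ext y
  have h : (fun k : Fin (j + 1) → N => dHomog G j F fun i => (y i).out * ((k i : G))⁻¹) =
      ∑ i : Fin (j + 1), (-1 : ℝ) ^ (i : ℕ) • fun k =>
        (fun k' : Fin j → N => F fun a => (i.removeNth y a).out * ((k' a : G))⁻¹)
          (i.removeNth k) := by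
    ext k
    simp only [dHomog_apply, Finset.sum_apply, Pi.smul_apply, smul_eq_mul]
    rfl
  rw [quotAvg_apply, h, map_sum, dHomog_apply]
  refine Finset.sum_congr rfl fun i _ => ?_
  rw [map_smul, smul_eq_mul, quotAvg_apply, ← m.iter_comp_removeNth i]

variable [N.Normal]

lemma quotAvg_pullCochain {j : ℕ} (V : (Fin j → G ⧸ N) → ℝ) :
    quotAvg N m j (pullCochain (QuotientGroup.mk' N) j V) = V := by
  ext y
  have h (k : Fin j → N) : (fun i => QuotientGroup.mk' N ((y i).out * ((k i : G))⁻¹)) = y := by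
    ext i
    simp
  simp only [quotAvg_apply, pullCochain, LinearMap.coe_mk, AddHom.coe_mk, h, m.iter_const]

lemma quotAvg_comp_smul {j : ℕ} {F : (Fin j → G) → ℝ} (hF : IsBdd F) (g : G)
    (y : Fin j → G ⧸ N) :
    quotAvg N m j (fun x => F (g • x)) y = quotAvg N m j F ((g : G ⧸ N) • y) := by
  -- `(ḡ yᵢ).out = g (yᵢ).out cᵢ` with `cᵢ ∈ N`, which right invariance of the mean absorbs
  choose c hc using fun i => QuotientGroup.mk_out_eq_mul N (g * (y i).out)
  have hy (i : Fin j) : (g : G ⧸ N) * y i = ((g * (y i).out : G) : G ⧸ N) := by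
    simp
  obtain ⟨C, hC⟩ := hF
  rw [quotAvg_apply, quotAvg_apply,
    ← m.iter_mul_right (f := fun k => F (g • fun i => (y i).out * ((k i : G))⁻¹))
      ⟨C, fun _ => hC _⟩ c⁻¹]
  congr 1; ext k; congr 1; ext i
  simp only [Pi.smul_apply, smul_eq_mul]
  rw [hy, hc]
  simp [mul_assoc]

noncomputable def cosetAvg (j : ℕ) : ((Fin j → G) → ℝ) →ₗ[ℝ] ((Fin j → G) → ℝ) :=
  pullCochain (QuotientGroup.mk' N) j ∘ₗ quotAvg N m j

lemma cosetAvg_apply {j : ℕ} (F : (Fin j → G) → ℝ) (x : Fin j → G) :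
    cosetAvg N m j F x = quotAvg N m j F fun i => (x i : G ⧸ N) := rfl

lemma cosetAvg_degree_zero (F : (Fin 0 → G) → ℝ) : cosetAvg N m 0 F = F := by
  ext x
  rw [cosetAvg_apply, quotAvg_apply, m.iter_zero_apply _ finZeroElim]
  congr 1; ext i; exact i.elim0

lemma cosetAvg_dHomog {j : ℕ} (F : (Fin j → G) → ℝ) :
    cosetAvg N m (j + 1) (dHomog G j F) = dHomog G j (cosetAvg N m j F) := by
  rw [cosetAvg, LinearMap.comp_apply, quotAvg_dHomog, pullCochain_dHomog]; rfl

lemma cosetAvg_comp_smul {j : ℕ} {F : (Fin j → G) → ℝ} (hF : IsBdd F) (g : G) :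
    cosetAvg N m j (fun x => F (g • x)) = fun x => cosetAvg N m j F (g • x) := by
  ext x
  rw [cosetAvg_apply, cosetAvg_apply, quotAvg_comp_smul N m hF]; rfl

end Averaging

section Homotopy

variable {G : Type*} [Group G] (N : Subgroup G) [N.Normal] (m : LinearMean N)

/-- A chain homotopy between the identity and `cosetAvg`, built degree by degree: the defect of
the homotopy identity in the previous degree is contracted by slicing at the first coordinate of
the point of evaluation, which keeps the construction equivariant. -/
noncomputable def homotopy : ∀ j : ℕ, ((Fin (j + 1) → G) → ℝ) →ₗ[ℝ] ((Fin j → G) → ℝ)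
  | 0 => 0
  | j + 1 => LinearMap.pi fun y => LinearMap.proj y ∘ₗ
      (LinearMap.id - cosetAvg N m (j + 1) - dHomog G j ∘ₗ homotopy j) ∘ₗ coneAt (y 0)

noncomputable def homotopyDefect (j : ℕ) :
    ((Fin (j + 1) → G) → ℝ) →ₗ[ℝ] ((Fin (j + 1) → G) → ℝ) :=
  LinearMap.id - cosetAvg N m (j + 1) - dHomog G j ∘ₗ homotopy N m j

lemma homotopyDefect_apply {j : ℕ} (F : (Fin (j + 1) → G) → ℝ) :
    homotopyDefect N m j F = F - cosetAvg N m (j + 1) F - dHomog G j (homotopy N m j F) := rfl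

lemma homotopy_succ_apply {j : ℕ} (H : (Fin (j + 2) → G) → ℝ) (y : Fin (j + 1) → G) :
    homotopy N m (j + 1) H y = homotopyDefect N m j (coneAt (y 0) H) y := rfl

lemma homotopy_succ_dHomog_of {j : ℕ}
    (hj : ∀ B, homotopyDefect N m j (dHomog G j B) = 0) (F : (Fin (j + 1) → G) → ℝ) :
    homotopy N m (j + 1) (dHomog G (j + 1) F) = homotopyDefect N m j F := by
  ext y
  rw [homotopy_succ_apply, coneAt_dHomog, map_sub, hj, sub_zero]

lemma homotopyDefect_dHomog : ∀ (j : ℕ) (B : (Fin j → G) → ℝ),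
    homotopyDefect N m j (dHomog G j B) = 0
  | 0, B => by
    rw [homotopyDefect_apply, cosetAvg_dHomog, cosetAvg_degree_zero]
    simp [homotopy]
  | j + 1, B => by
    rw [homotopyDefect_apply, cosetAvg_dHomog,
      homotopy_succ_dHomog_of N m (homotopyDefect_dHomog j), homotopyDefect_apply]
    simp only [map_sub, dHomog_dHomog]
    abel

/-- The homotopy identity `d K + K d = id - cosetAvg`. -/
theorem homotopy_succ_dHomog (j : ℕ) (F : (Fin (j + 1) → G) → ℝ) :
    homotopy N m (j + 1) (dHomog G (j + 1) F) = homotopyDefect N m j F :=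
  homotopy_succ_dHomog_of N m (homotopyDefect_dHomog N m j) F

lemma sub_cosetAvg_eq_dHomog_homotopy {j : ℕ} {F : (Fin (j + 1) → G) → ℝ}
    (hF : dHomog G (j + 1) F = 0) :
    F - cosetAvg N m (j + 1) F = dHomog G j (homotopy N m j F) := by
  have h := homotopy_succ_dHomog N m j F
  rw [hF, map_zero, homotopyDefect_apply] at h
  exact sub_eq_zero.1 h.symm

lemma exists_abs_homotopy_le (j : ℕ) : ∃ c : ℝ, ∀ (F : (Fin (j + 1) → G) → ℝ) (C : ℝ),
    (∀ x, |F x| ≤ C) → ∀ y, |homotopy N m j F y| ≤ c * C := by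
  induction j with
  | zero => exact ⟨0, fun F C _ y => by simp [homotopy]⟩
  | succ j ih =>
    obtain ⟨c, hc⟩ := ih
    refine ⟨2 + (j + 1) * c, fun H C hH y => ?_⟩
    have hF : ∀ x, |coneAt (y 0) H x| ≤ C := fun x => hH _
    have h1 := abs_quotAvg_le N m hF fun i => (y i : G ⧸ N)
    have h2 := abs_dHomog_le (hc _ C hF) y
    rw [homotopy_succ_apply, homotopyDefect_apply, Pi.sub_apply, Pi.sub_apply, cosetAvg_apply]
    have h0 := abs_le.1 (hF y)
    rw [abs_le] at h1 h2 ⊢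
    constructor <;> linarith

lemma isBdd_homotopy {j : ℕ} {F : (Fin (j + 1) → G) → ℝ} (hF : IsBdd F) :
    IsBdd (homotopy N m j F) := by
  obtain ⟨C, hC⟩ := hF
  obtain ⟨c, hc⟩ := exists_abs_homotopy_le N m j
  exact ⟨c * C, hc F C hC⟩

lemma homotopy_comp_smul {j : ℕ} {H : (Fin (j + 1) → G) → ℝ} (hH : IsBdd H) (g : G) :
    homotopy N m j (fun x => H (g • x)) = fun y => homotopy N m j H (g • y) := by
  induction j with
  | zero => rfl
  | succ j ih =>
    ext y
    have hcone : coneAt (y 0) (fun x => H (g • x)) = fun x => coneAt ((g • y) 0) H (g • x) := by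
      ext x
      simp only [coneAt_apply]
      congr 1; ext i; cases i using Fin.cases <;> rfl
    obtain ⟨C, hC⟩ := hH
    have hbdd : IsBdd (coneAt ((g • y) 0) H) := ⟨C, fun _ => hC _⟩
    rw [homotopy_succ_apply, homotopy_succ_apply, hcone, homotopyDefect_apply,
      homotopyDefect_apply, ih hbdd, dHomog_comp_smul, cosetAvg_comp_smul N m hbdd]
    rfl

lemma isDiagInvariant_homotopy {j : ℕ} {F : (Fin (j + 1) → G) → ℝ} (hF : IsBdd F)
    (hinv : IsDiagInvariant F) : IsDiagInvariant (homotopy N m j F) := by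
  intro g y
  rw [← congrFun (homotopy_comp_smul N m hF g) y, funext (hinv g)]

end Homotopy

section Dictionary

variable {G : Type*} [Group G]

def toHomog (n : ℕ) : ((Fin n → G) → ℝ) →ₗ[ℝ] ((Fin (n + 1) → G) → ℝ) :=
  LinearMap.funLeft ℝ ℝ fun x i => (x i.castSucc)⁻¹ * x i.succ

def ofHomog (n : ℕ) : ((Fin (n + 1) → G) → ℝ) →ₗ[ℝ] ((Fin n → G) → ℝ) :=
  LinearMap.funLeft ℝ ℝ Fin.partialProd

lemma isBdd_toHomog {n : ℕ} {f : (Fin n → G) → ℝ} (hf : IsBdd f) : IsBdd (toHomog n f) := by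
  obtain ⟨C, hC⟩ := hf
  exact ⟨C, fun _ => hC _⟩

lemma isBdd_ofHomog {n : ℕ} {F : (Fin (n + 1) → G) → ℝ} (hF : IsBdd F) : IsBdd (ofHomog n F) := by
  obtain ⟨C, hC⟩ := hF
  exact ⟨C, fun _ => hC _⟩

lemma ofHomog_toHomog {n : ℕ} (f : (Fin n → G) → ℝ) : ofHomog n (toHomog n f) = f := by
  ext g
  simp [ofHomog, toHomog, Fin.partialProd_right_inv]

lemma toHomog_ofHomog {n : ℕ} {F : (Fin (n + 1) → G) → ℝ} (hF : IsDiagInvariant F) :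
    toHomog n (ofHomog n F) = F := by
  ext x
  conv_rhs => rw [← Fin.partialProd_left_inv x, hF]
  rfl

lemma isDiagInvariant_toHomog {n : ℕ} (f : (Fin n → G) → ℝ) : IsDiagInvariant (toHomog n f) := by
  intro g x
  simp [toHomog, mul_assoc]

lemma isDiagInvariant_dHomog {j : ℕ} {F : (Fin j → G) → ℝ} (hF : IsDiagInvariant F) :
    IsDiagInvariant (dHomog G j F) := fun g x => by
  rw [← congrFun (dHomog_comp_smul F g) x, funext (hF g)]

lemma tface_zero {n : ℕ} (g : Fin (n + 1) → G) : tface 0 g = Fin.tail g := by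
  ext j
  simp [tface, Fin.tail]

lemma tface_succ {n : ℕ} (a : Fin (n + 1)) (g : Fin (n + 1) → G) :
    tface a.succ g = a.contractNth (· * ·) g := by
  ext j
  simp only [tface, Fin.contractNth, Fin.val_succ, add_lt_add_iff_right, add_left_inj]

lemma ofHomog_dHomog {n : ℕ} {F : (Fin (n + 1) → G) → ℝ} (hF : IsDiagInvariant F) :
    ofHomog (n + 1) (dHomog G (n + 1) F) = dGrp G n (ofHomog n F) := by
  ext g
  simp only [ofHomog, LinearMap.funLeft_apply, dHomog_apply, dGrp, LinearMap.coe_mk,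
    AddHom.coe_mk]
  rw [Fin.sum_univ_succ (n := n + 1), Fin.sum_univ_succ (n := n + 1)]
  congr 1
  -- the `0`-th faces differ by the translation `g 0 • partialProd (tail g) = tail (partialProd g)`
  · rw [Fin.removeNth_zero, tface_zero, ← hF (g 0) (Fin.partialProd (Fin.tail g))]
    congr 2; ext j
    simp [Fin.tail, Fin.partialProd_succ']
  · refine Finset.sum_congr rfl fun a _ => ?_
    rw [tface_succ, Fin.partialProd_contractNth]
    rfl

lemma toHomog_dGrp {n : ℕ} (f : (Fin n → G) → ℝ) :
    toHomog (n + 1) (dGrp G n f) = dHomog G (n + 1) (toHomog n f) := by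
  conv_lhs => rw [← ofHomog_toHomog f, ← ofHomog_dHomog (isDiagInvariant_toHomog f)]
  exact toHomog_ofHomog (isDiagInvariant_dHomog (isDiagInvariant_toHomog f))

lemma toHomog_pullCochain {Q : Type*} [Group Q] (p : G →* Q) {n : ℕ} (f : (Fin n → Q) → ℝ) :
    toHomog n (pullCochain p n f) = pullCochain p (n + 1) (toHomog n f) := by
  ext x
  simp [toHomog, pullCochain]

end Dictionary

section BoundedCochains

variable {G H : Type*} [Group G] [Group H]

lemma mem_cocycles_iff {n : ℕ} {f : (Fin n → G) → ℝ} :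
    f ∈ cocycles G n ↔ IsBdd f ∧ dGrp G n f = 0 := Iff.rfl

lemma mem_coboundaries_succ_iff {n : ℕ} {f : (Fin (n + 1) → G) → ℝ} :
    f ∈ coboundaries G (n + 1) ↔ ∃ b, IsBdd b ∧ dGrp G n b = f := Iff.rfl

lemma pullCochain_dGrp (p : G →* H) {n : ℕ} (z : (Fin n → H) → ℝ) :
    pullCochain p (n + 1) (dGrp H n z) = dGrp G n (pullCochain p n z) := by
  ext g
  simp only [pullCochain, dGrp, LinearMap.coe_mk, AddHom.coe_mk]
  refine Finset.sum_congr rfl fun i _ => ?_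
  congr 2; ext j
  simp only [tface]
  split_ifs <;> simp

lemma isBdd_pullCochain {X Y : Type*} (p : X → Y) {n : ℕ} {z : (Fin n → Y) → ℝ} (hz : IsBdd z) :
    IsBdd (pullCochain p n z) := by
  obtain ⟨C, hC⟩ := hz
  exact ⟨C, fun _ => hC _⟩

lemma pullCochain_mem_cocycles (p : G →* H) {n : ℕ} {z : (Fin n → H) → ℝ}
    (hz : z ∈ cocycles H n) : pullCochain p n z ∈ cocycles G n :=
  mem_cocycles_iff.2 ⟨isBdd_pullCochain p hz.1, by rw [← pullCochain_dGrp, hz.2, map_zero]⟩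

lemma pullCochain_mem_coboundaries (p : G →* H) {n : ℕ} {z : (Fin n → H) → ℝ}
    (hz : z ∈ coboundaries H n) : pullCochain p n z ∈ coboundaries G n := by
  cases n with
  | zero => rw [(Submodule.mem_bot ℝ).1 hz, map_zero]; exact Submodule.zero_mem _
  | succ n =>
    obtain ⟨b, hb, rfl⟩ := mem_coboundaries_succ_iff.1 hz
    exact ⟨_, isBdd_pullCochain p hb, (pullCochain_dGrp p b).symm⟩

end BoundedCochains

section Transfer

variable {G : Type*} [Group G] (N : Subgroup G) [N.Normal] (m : LinearMean N)

lemma isDiagInvariant_quotAvg {j : ℕ} {F : (Fin j → G) → ℝ} (hF : IsBdd F)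
    (hinv : IsDiagInvariant F) : IsDiagInvariant (quotAvg N m j F) := by
  intro q y
  obtain ⟨g, rfl⟩ := QuotientGroup.mk_surjective q
  rw [← quotAvg_comp_smul N m hF, funext (hinv g)]

noncomputable def transfer (n : ℕ) : ((Fin n → G) → ℝ) →ₗ[ℝ] ((Fin n → G ⧸ N) → ℝ) :=
  ofHomog n ∘ₗ quotAvg N m (n + 1) ∘ₗ toHomog n

lemma toHomog_transfer {n : ℕ} {f : (Fin n → G) → ℝ} (hf : IsBdd f) :
    toHomog n (transfer N m n f) = quotAvg N m (n + 1) (toHomog n f) :=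
  toHomog_ofHomog (isDiagInvariant_quotAvg N m (isBdd_toHomog hf) (isDiagInvariant_toHomog f))

lemma transfer_pullCochain {n : ℕ} (z : (Fin n → G ⧸ N) → ℝ) :
    transfer N m n (pullCochain (QuotientGroup.mk' N) n z) = z := by
  rw [transfer, LinearMap.comp_apply, LinearMap.comp_apply, toHomog_pullCochain,
    quotAvg_pullCochain, ofHomog_toHomog]

lemma transfer_dGrp {n : ℕ} {f : (Fin n → G) → ℝ} (hf : IsBdd f) :
    transfer N m (n + 1) (dGrp G n f) = dGrp (G ⧸ N) n (transfer N m n f) := by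
  simp only [transfer, LinearMap.comp_apply]
  rw [toHomog_dGrp, quotAvg_dHomog,
    ofHomog_dHomog (isDiagInvariant_quotAvg N m (isBdd_toHomog hf) (isDiagInvariant_toHomog f))]

lemma abs_transfer_le {n : ℕ} {f : (Fin n → G) → ℝ} {C : ℝ} (hf : ∀ g, |f g| ≤ C)
    (q : Fin n → G ⧸ N) : |transfer N m n f q| ≤ C :=
  abs_quotAvg_le N m (F := toHomog n f) (fun _ => hf _) (Fin.partialProd q)

lemma isBdd_transfer {n : ℕ} {f : (Fin n → G) → ℝ} (hf : IsBdd f) : IsBdd (transfer N m n f) := by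
  obtain ⟨C, hC⟩ := hf
  exact ⟨C, abs_transfer_le N m hC⟩

lemma sub_pullCochain_transfer {n : ℕ} {f : (Fin n → G) → ℝ} (hf : IsBdd f)
    (hdf : dGrp G n f = 0) :
    f - pullCochain (QuotientGroup.mk' N) n (transfer N m n f) =
      ofHomog n (dHomog G n (homotopy N m n (toHomog n f))) := by
  have hd : dHomog G (n + 1) (toHomog n f) = 0 := by rw [← toHomog_dGrp, hdf, map_zero]
  have hpull : pullCochain (QuotientGroup.mk' N) n (transfer N m n f) =
      ofHomog n (cosetAvg N m (n + 1) (toHomog n f)) := by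
    rw [← ofHomog_toHomog (pullCochain _ n _), toHomog_pullCochain, toHomog_transfer N m hf]
    rfl
  rw [hpull, ← sub_cosetAvg_eq_dHomog_homotopy N m hd, map_sub, ofHomog_toHomog]

lemma transfer_mem_cocycles {n : ℕ} {f : (Fin n → G) → ℝ} (hf : f ∈ cocycles G n) :
    transfer N m n f ∈ cocycles (G ⧸ N) n :=
  mem_cocycles_iff.2 ⟨isBdd_transfer N m hf.1, by rw [← transfer_dGrp N m hf.1, hf.2, map_zero]⟩

lemma transfer_mem_coboundaries {n : ℕ} {f : (Fin n → G) → ℝ} (hf : f ∈ coboundaries G n) :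
    transfer N m n f ∈ coboundaries (G ⧸ N) n := by
  cases n with
  | zero => rw [(Submodule.mem_bot ℝ).1 hf, map_zero]; exact Submodule.zero_mem _
  | succ n =>
    obtain ⟨b, hb, rfl⟩ := mem_coboundaries_succ_iff.1 hf
    exact ⟨_, isBdd_transfer N m hb, (transfer_dGrp N m hb).symm⟩

lemma sub_pullCochain_transfer_mem_coboundaries {n : ℕ} {f : (Fin n → G) → ℝ}
    (hf : f ∈ cocycles G n) :
    f - pullCochain (QuotientGroup.mk' N) n (transfer N m n f) ∈ coboundaries G n := by
  rw [sub_pullCochain_transfer N m hf.1 hf.2]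
  cases n with
  | zero => simp [homotopy]
  | succ n =>
    have hF := isBdd_ofHomog (isBdd_homotopy N m (isBdd_toHomog hf.1))
    exact ⟨_, hF, (ofHomog_dHomog (isDiagInvariant_homotopy N m (isBdd_toHomog hf.1)
      (isDiagInvariant_toHomog _))).symm⟩

end Transfer

abbrev BddCohomology (G : Type*) [Group G] (n : ℕ) : Type _ :=
  ↥(cocycles G n) ⧸ (coboundaries G n).comap (cocycles G n).subtype

namespace BddCohomology

variable {G H : Type*} [Group G] [Group H]

noncomputable def pullback (p : G →* H) (n : ℕ) : BddCohomology H n →ₗ[ℝ] BddCohomology G n :=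
  Submodule.mapQ _ _ ((pullCochain p n).restrict fun _ hz => pullCochain_mem_cocycles p hz)
    fun _ hz => pullCochain_mem_coboundaries p hz

lemma qnorm_le_of_forall {n : ℕ} (α : BddCohomology G n) (β : BddCohomology H n)
    (h : ∀ w : cocycles H n, Submodule.Quotient.mk w = β →
      ∃ z : cocycles G n, Submodule.Quotient.mk z = α ∧
        supN (z : (Fin n → G) → ℝ) ≤ supN (w : (Fin n → H) → ℝ)) :
    qnorm G n α ≤ qnorm H n β := by
  unfold qnorm
  obtain ⟨w₀, hw₀⟩ := Submodule.Quotient.mk_surjective _ β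
  refine le_csInf ⟨_, w₀, hw₀, rfl⟩ ?_
  rintro _ ⟨w, hw, rfl⟩
  obtain ⟨z, hz, hle⟩ := h w hw
  have hbdd : BddBelow {r : ℝ | ∃ z : cocycles G n, Submodule.Quotient.mk z = α ∧
      r = supN (z : (Fin n → G) → ℝ)} := ⟨0, by rintro _ ⟨z', -, rfl⟩; exact supN_nonneg _⟩
  exact (csInf_le hbdd ⟨z, hz, rfl⟩).trans hle

lemma qnorm_pullback_le (p : G →* H) {n : ℕ} (α : BddCohomology H n) :
    qnorm G n (pullback p n α) ≤ qnorm H n α :=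
  qnorm_le_of_forall _ _ fun w hw => ⟨⟨_, pullCochain_mem_cocycles p w.2⟩, by rw [← hw]; rfl,
    supN_le fun x => abs_le_supN w.2.1 fun i => p (x i)⟩

variable (N : Subgroup G) [N.Normal] (m : LinearMean N)

noncomputable def transfer (n : ℕ) : BddCohomology G n →ₗ[ℝ] BddCohomology (G ⧸ N) n :=
  Submodule.mapQ _ _ ((_root_.transfer N m n).restrict fun _ hf => transfer_mem_cocycles N m hf)
    fun _ hf => transfer_mem_coboundaries N m hf

lemma transfer_pullback {n : ℕ} (α : BddCohomology (G ⧸ N) n) :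
    transfer N m n (pullback (QuotientGroup.mk' N) n α) = α := by
  obtain ⟨z, rfl⟩ := Submodule.Quotient.mk_surjective _ α
  exact congrArg Submodule.Quotient.mk
    (Subtype.ext (transfer_pullCochain N m (z : (Fin n → G ⧸ N) → ℝ)))

lemma pullback_transfer {n : ℕ} (β : BddCohomology G n) :
    pullback (QuotientGroup.mk' N) n (transfer N m n β) = β := by
  obtain ⟨w, rfl⟩ := Submodule.Quotient.mk_surjective _ β
  refine (Submodule.Quotient.eq' _).2 ?_
  rw [neg_add_eq_sub]
  exact sub_pullCochain_transfer_mem_coboundaries N m w.2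

lemma qnorm_transfer_le {n : ℕ} (β : BddCohomology G n) :
    qnorm (G ⧸ N) n (transfer N m n β) ≤ qnorm G n β :=
  qnorm_le_of_forall _ _ fun w hw => ⟨⟨_, transfer_mem_cocycles N m w.2⟩, by rw [← hw]; rfl,
    supN_le (abs_transfer_le N m (abs_le_supN w.2.1))⟩

end BddCohomology

/-- **Theorem B.** If `κ` is a normal amenable subgroup of `π`, then the
pullback along the quotient homomorphism `p : π → π/κ` induces a linear bijection
`Ĥ_b^n(π/κ) → Ĥ_b^n(π)` which preserves the quotient seminorms. -/
theorem bounded_cohomology_iso_of_normal_amenable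
    (π : Type) [Group π] (κ : Subgroup π) [κ.Normal] (hκ : Amenable ↥κ) (n : ℕ) :
    ∃ Φ : (↥(cocycles (π ⧸ κ) n) ⧸ (coboundaries (π ⧸ κ) n).comap (cocycles (π ⧸ κ) n).subtype)
        →ₗ[ℝ] (↥(cocycles π n) ⧸ (coboundaries π n).comap (cocycles π n).subtype),
      Function.Bijective Φ ∧
      (∀ (z : ↥(cocycles (π ⧸ κ) n))
          (hz : pullCochain (⇑(QuotientGroup.mk' κ)) n (z : (Fin n → π ⧸ κ) → ℝ) ∈ cocycles π n),
        Φ (Submodule.Quotient.mk z) = Submodule.Quotient.mk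
          (⟨pullCochain (⇑(QuotientGroup.mk' κ)) n (z : (Fin n → π ⧸ κ) → ℝ), hz⟩ :
            ↥(cocycles π n))) ∧
      (∀ α, qnorm π n (Φ α) = qnorm (π ⧸ κ) n α) := by
  obtain ⟨m⟩ := hκ.nonempty_linearMean
  have hleft : LeftInverse (BddCohomology.transfer κ m n)
      (BddCohomology.pullback (QuotientGroup.mk' κ) n) := BddCohomology.transfer_pullback κ m
  have hright : RightInverse (BddCohomology.transfer κ m n)
      (BddCohomology.pullback (QuotientGroup.mk' κ) n) := BddCohomology.pullback_transfer κ m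
  refine ⟨BddCohomology.pullback (QuotientGroup.mk' κ) n, ⟨hleft.injective, hright.surjective⟩,
    fun _ _ => rfl, fun α => le_antisymm (BddCohomology.qnorm_pullback_le _ α) ?_⟩
  calc qnorm (π ⧸ κ) n α
      = qnorm (π ⧸ κ) n (BddCohomology.transfer κ m n (BddCohomology.pullback _ n α)) := by
        rw [hleft α]
    _ ≤ qnorm π n (BddCohomology.pullback _ n α) := BddCohomology.qnorm_transfer_le κ m _
end

section
/- Let (m_n)_{n∈ℕ} be a coherent family of averaging operators and K a simplicial set. For a bounded function f : K_n × Γ_n → ℝ define m_*(f) : K_n → ℝ by m_*(f)(σ) = m_n(τ ↦ f(σ, τ)). Then m_* is a cochain map: for every bounded f : K_n × Γ_n → ℝ and every (n+1)-simplex ρ of K, Σ_{i=0}^{n+1} (−1)^i m_*(f)(∂_i ρ) = m_{n+1}( τ ↦ Σ_{i=0}^{n+1} (−1)^i f(∂_i ρ, ∂_i τ) ); that is, ∂*(m_*(f)) = m_*(∂*(f)), where ∂* denotes the coboundary on bounded cochains of K and of K × Γ respectively. -/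
open CategoryTheory Simplicial

/-- `Γ n`: the set of `n`-simplices of the Δ-set `Δ[∞]`,
i.e. strictly increasing maps `Fin (n+1) → ℕ`. -/
def Gma (n : ℕ) : Type := {f : Fin (n + 1) → ℕ // StrictMono f}

/-- The `i`-th face map `∂ᵢ : Γ (n+1) → Γ n`, precomposition with the unique strictly
increasing map `Fin (n+1) → Fin (n+2)` omitting `i`. -/
def faceG {n : ℕ} (i : Fin (n + 2)) (τ : Gma (n + 1)) : Gma n :=
  ⟨fun j => τ.1 (i.succAbove j), τ.2.comp (Fin.strictMono_succAbove i)⟩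

lemma comp_mem_bddFns {X Y : Type*} {f : Y → ℝ} (hf : f ∈ bddFns Y) (g : X → Y) :
    (fun x => f (g x)) ∈ bddFns X := by
  obtain ⟨C, hC⟩ := hf
  exact ⟨C, fun x => hC (g x)⟩

/-- The simplicial coboundary operator associated to a system of faces. -/
noncomputable def dgen {X Y : Type*} (N : ℕ) (face : Fin N → Y → X) :
    (X → ℝ) →ₗ[ℝ] (Y → ℝ) where
  toFun f := fun y => ∑ i : Fin N, (-1 : ℝ) ^ (i : ℕ) * f (face i y)
  map_add' f g := by
    funext y
    simp only [Pi.add_apply, mul_add]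
    rw [Finset.sum_add_distrib]
  map_smul' r f := by
    funext y
    simp only [Pi.smul_apply, smul_eq_mul, RingHom.id_apply, Finset.mul_sum]
    exact Finset.sum_congr rfl fun i _ => by ring

/-- Extension of the averaging operator `m n` to all functions `Γ n → ℝ`
(by `0` on unbounded functions); on bounded functions it is just `m n`. -/
noncomputable def Mext (m : ∀ n : ℕ, ↥(bddFns (Gma n)) →ₗ[ℝ] ℝ) (n : ℕ)
    (g : Gma n → ℝ) : ℝ :=
  @dite _ (IsBdd g) (Classical.dec _) (fun h => m n ⟨g, h⟩) (fun _ => 0)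

section Averaging

variable (m : ∀ n : ℕ, ↥(bddFns (Gma n)) →ₗ[ℝ] ℝ) {n : ℕ}

theorem Mext_of_isBdd {g : Gma n → ℝ} (hg : IsBdd g) : Mext m n g = m n ⟨g, hg⟩ :=
  dif_pos hg

theorem Mext_sum_mul {ι : Type*} (s : Finset ι) (c : ι → ℝ) {g : ι → Gma n → ℝ}
    (hg : ∀ i, IsBdd (g i)) :
    Mext m n (fun τ => ∑ i ∈ s, c i * g i τ) = ∑ i ∈ s, c i * Mext m n (g i) := by
  let G : ↥(bddFns (Gma n)) := ∑ i ∈ s, c i • ⟨g i, hg i⟩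
  have hG : (G : Gma n → ℝ) = fun τ => ∑ i ∈ s, c i * g i τ := by
    funext τ
    simp [G]
  rw [← hG, Mext_of_isBdd m G.2, map_sum]
  refine Finset.sum_congr rfl fun i _ => ?_
  rw [map_smul, smul_eq_mul, Mext_of_isBdd m (hg i)]

theorem Mext_comp_faceG (i : Fin (n + 2))
    (hcoherent : ∀ f : ↥(bddFns (Gma n)),
      m (n + 1) ⟨fun τ => (f : Gma n → ℝ) (faceG i τ), comp_mem_bddFns f.2 (faceG i)⟩
        = m n f)
    {g : Gma n → ℝ} (hg : IsBdd g) :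
    Mext m (n + 1) (fun τ => g (faceG i τ)) = Mext m n g := by
  rw [Mext_of_isBdd m hg, ← hcoherent ⟨g, hg⟩]
  exact Mext_of_isBdd m _

end Averaging

theorem averaging_is_cochain_map_general
    (m : ∀ n : ℕ, ↥(bddFns (Gma n)) →ₗ[ℝ] ℝ)
    (hcoherent : ∀ (n : ℕ) (i : Fin (n + 2)) (f : ↥(bddFns (Gma n))),
      m (n + 1) ⟨fun τ => (f : Gma n → ℝ) (faceG i τ), comp_mem_bddFns f.2 (faceG i)⟩
        = m n f)
    (K : SSet) (n : ℕ) (f : K _⦋n⦌ × Gma n → ℝ) (hf : IsBdd f) (ρ : K _⦋n + 1⦌) :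
    ∑ i : Fin (n + 2), (-1 : ℝ) ^ (i : ℕ) * Mext m n (fun τ => f (K.δ i ρ, τ))
      = Mext m (n + 1)
          (fun τ => ∑ i : Fin (n + 2), (-1 : ℝ) ^ (i : ℕ) * f (K.δ i ρ, faceG i τ)) := by
  have hslice : ∀ i : Fin (n + 2), IsBdd fun τ => f (K.δ i ρ, τ) :=
    fun i => comp_mem_bddFns hf (fun τ => (K.δ i ρ, τ))
  rw [Mext_sum_mul m Finset.univ _ fun i => comp_mem_bddFns (hslice i) (faceG i)]
  exact Finset.sum_congr rfl fun i _ => by rw [Mext_comp_faceG m i (hcoherent n i) (hslice i)]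

/-- Averaging over the fibers of the projection `K × Γ → K` by a
coherent family of averaging operators is a cochain map on bounded cochains:
`∂*(m_* f) = m_* (∂* f)`, i.e. for every bounded `f : K_n × Γ_n → ℝ` and every
`(n+1)`-simplex `ρ` of `K`,
`∑ᵢ (-1)ⁱ m_*(f)(∂ᵢ ρ) = m_{n+1} (τ ↦ ∑ᵢ (-1)ⁱ f (∂ᵢ ρ, ∂ᵢ τ))`. -/
theorem averaging_is_cochain_map
    (m : ∀ n : ℕ, ↥(bddFns (Gma n)) →ₗ[ℝ] ℝ)
    (hnorm : ∀ (n : ℕ) (f : ↥(bddFns (Gma n))), |m n f| ≤ supN (f : Gma n → ℝ))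
    (hconst : ∀ (n : ℕ) (r : ℝ), m n ⟨fun _ => r, const_mem_bddFns _ r⟩ = r)
    (hcoherent : ∀ (n : ℕ) (i : Fin (n + 2)) (f : ↥(bddFns (Gma n))),
      m (n + 1) ⟨fun τ => (f : Gma n → ℝ) (faceG i τ), comp_mem_bddFns f.2 (faceG i)⟩
        = m n f)
    (K : SSet) (n : ℕ) (f : K _⦋n⦌ × Gma n → ℝ) (hf : IsBdd f) (ρ : K _⦋n + 1⦌) :
    ∑ i : Fin (n + 2), (-1 : ℝ) ^ (i : ℕ) * Mext m n (fun τ => f (K.δ i ρ, τ))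
      = Mext m (n + 1)
          (fun τ => ∑ i : Fin (n + 2), (-1 : ℝ) ^ (i : ℕ) * f (K.δ i ρ, faceG i τ)) :=
  averaging_is_cochain_map_general m hcoherent K n f hf ρ
end

section
/- There exists a function C : ℕ → ℝ such that for every simplicial set K there is a family of maps k_n (n ∈ ℕ) assigning to each triple (σ, τ, τ′) ∈ K_n × Γ_n × Γ_n an (n+1)-chain k_n(σ, τ, τ′) of the unraveling K × Γ with integer coefficients, satisfying: (i) ‖k_n(σ, τ, τ′)‖₁ ≤ C(n) for all triples; (ii) ∂ k_0(σ, τ, τ′) = (σ, τ) − (σ, τ′), and for every n ≥ 1, ∂ k_n(σ, τ, τ′) = (σ, τ) − (σ, τ′) − Σ_{i=0}^{n} (−1)^i k_{n−1}(∂_i σ, ∂_i τ, ∂_i τ′), where an n-simplex is identified with the n-chain supported on it with coefficient 1. -/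
open CategoryTheory Simplicial

/-- The ℓ¹-norm of a chain with integer coefficients: the sum of the absolute values
of the coefficients. -/
def l1 {X : Type*} (c : X →₀ ℤ) : ℤ := ∑ x ∈ c.support, |c x|

/-- The boundary operator on chains of the unraveling `K × Γ` with integer coefficients:
`∂ c = ∑ᵢ (-1)ⁱ (∂ᵢ)_* c`. -/
noncomputable def bdryP (K : SSet) (n : ℕ) (c : (K _⦋n + 1⦌ × Gma (n + 1)) →₀ ℤ) :
    (K _⦋n⦌ × Gma n) →₀ ℤ :=
  ∑ i : Fin (n + 2), ((-1 : ℤ) ^ (i : ℕ)) •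
    Finsupp.mapDomain (fun x : K _⦋n + 1⦌ × Gma (n + 1) => (K.δ i x.1, faceG i x.2)) c

/-!
It suffices to treat the universal simplex: a chain on `Δ[n] × Γ` is carried to `K × Γ` by the
map classifying `σ : K_n`, which commutes with faces and, precomposed with `δⁱ : Δ[n] → Δ[n+1]`,
becomes the map classifying `∂ᵢσ`. On `Δ[n] × Γ` the homotopy is built by induction on `n`: the chain
`z = (id, τ) - (id, τ') - ∑ᵢ (-1)ⁱ δⁱ_* k_{n-1}(∂ᵢτ, ∂ᵢτ')` is a cycle (augmented when `n = 0`)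
because of the simplicial identities, and `Δ[n] × Γ` is acyclic through the cone that appends the
last vertex of `Δ[n]` and a vertex of `Γ` beyond every vertex occurring in `z`; so `k_n = cone z`
has `∂ k_n = z`. Coning and pushing forward do not increase the ℓ¹-norm, whence
`‖k_n‖₁ ≤ 2 + (n + 1) ‖k_{n-1}‖₁`.
-/

open Finsupp

section L1

variable {X Y : Type*}

lemma l1_eq_sum_of_support_subset {c : X →₀ ℤ} {s : Finset X} (hs : c.support ⊆ s) :
    l1 c = ∑ x ∈ s, |c x| :=
  Finset.sum_subset hs fun x _ hx => by rw [notMem_support_iff.mp hx, abs_zero]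

lemma l1_single (x : X) (a : ℤ) : l1 (single x a) = |a| := by
  classical
  rw [l1_eq_sum_of_support_subset support_single_subset, Finset.sum_singleton, single_eq_same]

lemma l1_add_le (a b : X →₀ ℤ) : l1 (a + b) ≤ l1 a + l1 b := by
  classical
  rw [l1_eq_sum_of_support_subset support_add,
    l1_eq_sum_of_support_subset (Finset.subset_union_left (s₂ := b.support)),
    l1_eq_sum_of_support_subset (Finset.subset_union_right (s₁ := a.support)),
    ← Finset.sum_add_distrib]
  exact Finset.sum_le_sum fun _ _ => abs_add_le _ _

lemma l1_zsmul (r : ℤ) (a : X →₀ ℤ) : l1 (r • a) = |r| * l1 a := by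
  rw [l1_eq_sum_of_support_subset support_smul, l1, Finset.mul_sum]
  simp only [Finsupp.smul_apply, smul_eq_mul, abs_mul]

lemma l1_neg_one_pow_zsmul (k : ℕ) (a : X →₀ ℤ) : l1 ((-1 : ℤ) ^ k • a) = l1 a := by
  rw [l1_zsmul, abs_pow, abs_neg, abs_one, one_pow, one_mul]

lemma l1_sub_le (a b : X →₀ ℤ) : l1 (a - b) ≤ l1 a + l1 b := by
  rw [sub_eq_add_neg, ← neg_one_zsmul, ← l1_neg_one_pow_zsmul 1 b, pow_one]
  exact l1_add_le _ _

lemma l1_sum_le {ι : Type*} (s : Finset ι) (c : ι → X →₀ ℤ) :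
    l1 (∑ i ∈ s, c i) ≤ ∑ i ∈ s, l1 (c i) :=
  Finset.le_sum_of_subadditive l1 (by simp [l1]) l1_add_le s c

lemma l1_mapDomain_le (f : X → Y) (c : X →₀ ℤ) : l1 (mapDomain f c) ≤ l1 c :=
  (l1_sum_le c.support _).trans (Finset.sum_le_sum fun _ _ => (l1_single _ _).le)

end L1

noncomputable def alternatingFaceSum {X Y : Type*} {N : ℕ} (d : Fin N → X → Y) :
    (X →₀ ℤ) →+ (Y →₀ ℤ) :=
  ∑ i : Fin N, (-1 : ℤ) ^ (i : ℕ) • mapDomain.addMonoidHom (d i)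

lemma alternatingFaceSum_apply {X Y : Type*} {N : ℕ} (d : Fin N → X → Y) (c : X →₀ ℤ) :
    alternatingFaceSum d c = ∑ i : Fin N, (-1 : ℤ) ^ (i : ℕ) • mapDomain (d i) c := by
  simp [alternatingFaceSum]

lemma alternatingFaceSum_mapDomain {X Y X' Y' : Type*} {N : ℕ} {d : Fin N → X → Y}
    {d' : Fin N → X' → Y'} {f : X → X'} {g : Y → Y'} (h : ∀ i x, d' i (f x) = g (d i x))
    (c : X →₀ ℤ) :
    alternatingFaceSum d' (mapDomain f c) = mapDomain g (alternatingFaceSum d c) := by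
  simp only [alternatingFaceSum_apply, mapDomain_finsetSum, mapDomain_smul, ← mapDomain_comp]
  exact Finset.sum_congr rfl fun i _ => congrArg _ (mapDomain_congr fun x _ => h i x)

lemma bdryP_eq_alternatingFaceSum (K : SSet) (n : ℕ)
    (c : (K _⦋n + 1⦌ × Gma (n + 1)) →₀ ℤ) :
    bdryP K n c = alternatingFaceSum (fun i x => (K.δ i x.1, faceG i x.2)) c :=
  (alternatingFaceSum_apply _ c).symm

theorem alternating_double_sum_eq_zero {M : Type*} [AddCommGroup M] {N : ℕ}
    (G : Fin (N + 2) → Fin (N + 1) → M)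
    (hG : ∀ i j : Fin (N + 1), i ≤ j → G i.castSucc j = G j.succ i) :
    ∑ i : Fin (N + 2), (-1 : ℤ) ^ (i : ℕ) • ∑ j : Fin (N + 1), (-1 : ℤ) ^ (j : ℕ) • G i j
      = 0 := by
  classical
  simp only [Finset.smul_sum, smul_smul, ← pow_add]
  rw [← Finset.sum_product' (f := fun (i : Fin (N + 2)) (j : Fin (N + 1)) =>
    (-1 : ℤ) ^ ((i : ℕ) + j) • G i j), Finset.univ_product_univ]
  let S : Finset (Fin (N + 2) × Fin (N + 1)) := {p | p.1 ≤ p.2.castSucc}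
  have hS {p} : p ∈ S ↔ p.1 ≤ p.2.castSucc := by simp [S]
  have hSc {p} : p ∈ Sᶜ ↔ p.2.castSucc < p.1 := by simp [S]
  have hlast {p} (hp : p ∈ S) : p.1 ≠ Fin.last _ :=
    Fin.ne_last_of_lt ((hS.1 hp).trans_lt (Fin.castSucc_lt_last _))
  rw [← Finset.sum_add_sum_compl S, add_eq_zero_iff_eq_neg, ← Finset.sum_neg_distrib]
  -- the term at `(i, j)` with `i ≤ j` cancels the one at `(j + 1, i)`
  refine Finset.sum_bij'
    (fun p hp => (p.2.succ, p.1.castPred (hlast hp)))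
    (fun q hq => (q.2.castSucc, q.1.pred (Fin.ne_zero_of_lt (hSc.1 hq))))
    (fun p hp => hSc.2 ?_) (fun q hq => hS.2 ?_) (fun p hp => ?_) (fun q hq => ?_)
    (fun p hp => ?_)
  · simpa [Fin.le_castSucc_iff] using hS.1 hp
  · simpa [Fin.castSucc_lt_iff_succ_le, Fin.le_pred_iff] using hSc.1 hq
  · simp
  · simp
  · have h : p.1.castPred (hlast hp) ≤ p.2 := by
      rw [← Fin.castSucc_le_castSucc_iff, Fin.castSucc_castPred]
      exact hS.1 hp
    rw [← hG _ _ h, Fin.castSucc_castPred, Fin.val_succ, Fin.coe_castPred, ← neg_smul]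
    congr 1
    ring

lemma faceG_faceG {n : ℕ} {i j : Fin (n + 2)} (h : i ≤ j) (τ : Gma (n + 2)) :
    faceG j (faceG i.castSucc τ) = faceG i (faceG j.succ τ) :=
  Subtype.ext <| funext fun t =>
    congrArg τ.1 (SimplexCategory.congr_toOrderHom_apply (SimplexCategory.δ_comp_δ h) t).symm

lemma Fin.strictMono_snoc {α : Type*} [Preorder α] {k : ℕ} {f : Fin (k + 1) → α}
    (hf : StrictMono f) {a : α} (ha : f (Fin.last k) < a) :
    StrictMono (Fin.snoc f a : Fin (k + 2) → α) := by
  refine Fin.strictMono_iff_lt_succ.mpr fun i => ?_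
  induction i using Fin.lastCases with
  | last => simpa using ha
  | cast i =>
    rw [Fin.succ_castSucc, Fin.snoc_castSucc, Fin.snoc_castSucc]
    exact hf i.castSucc_lt_succ

lemma Fin.monotone_snoc {α : Type*} [Preorder α] {k : ℕ} {f : Fin (k + 1) → α}
    (hf : Monotone f) {a : α} (ha : f (Fin.last k) ≤ a) :
    Monotone (Fin.snoc f a : Fin (k + 2) → α) := by
  refine Fin.monotone_iff_le_succ.mpr fun i => ?_
  induction i using Fin.lastCases with
  | last => simpa using ha
  | cast i =>
    rw [Fin.succ_castSucc, Fin.snoc_castSucc, Fin.snoc_castSucc]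
    exact hf i.castSucc_lt_succ.le

/-- The appended vertex is `m` whenever `m` exceeds the last vertex of `τ`; the `max` only makes
the map total. -/
def Gma.snoc {j : ℕ} (τ : Gma j) (m : ℕ) : Gma (j + 1) :=
  ⟨Fin.snoc τ.1 (max m (τ.1 (Fin.last j) + 1)),
    Fin.strictMono_snoc τ.2 (Nat.lt_of_lt_of_le (Nat.lt_succ_self _) (le_max_right _ _))⟩

def Gma.vertex (m : ℕ) : Gma 0 :=
  ⟨fun _ => m, fun a b h => (h.ne (Subsingleton.elim (α := Fin 1) a b)).elim⟩

def SimplexCategory.snocLast {j n : ℕ} (β : ⦋j⦌ ⟶ ⦋n⦌) : ⦋j + 1⦌ ⟶ ⦋n⦌ :=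
  SimplexCategory.mkHom ⟨Fin.snoc β.toOrderHom (Fin.last n),
    Fin.monotone_snoc β.toOrderHom.monotone (Fin.le_last _)⟩

/-- The `j`-simplices of the unraveling `Δ[n] × Γ`. -/
abbrev ModelSimplex (n j : ℕ) : Type := (⦋j⦌ ⟶ ⦋n⦌) × Gma j

abbrev ModelChain (n j : ℕ) : Type := ModelSimplex n j →₀ ℤ

namespace ModelSimplex

variable {n j : ℕ}

def face (i : Fin (j + 2)) (x : ModelSimplex n (j + 1)) : ModelSimplex n j :=
  (SimplexCategory.δ i ≫ x.1, faceG i x.2)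

def push (i : Fin (n + 2)) (x : ModelSimplex n j) : ModelSimplex (n + 1) j :=
  (x.1 ≫ SimplexCategory.δ i, x.2)

/-- The image of `x` under the map `Δ[n] × Γ → K × Γ` classifying `σ`. -/
noncomputable def realize (K : SSet) (σ : K _⦋n⦌) (x : ModelSimplex n j) : K _⦋j⦌ × Gma j :=
  (K.map x.1.op σ, x.2)

lemma face_push (i : Fin (n + 2)) (l : Fin (j + 2)) (x : ModelSimplex n (j + 1)) :
    face l (push i x) = push i (face l x) := by
  simp only [face, push, Category.assoc]

lemma push_push {i l : Fin (n + 2)} (h : i ≤ l) (x : ModelSimplex n j) :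
    push i.castSucc (push l x) = push l.succ (push i x) := by
  simp only [push, Category.assoc, SimplexCategory.δ_comp_δ h]

lemma face_id (i : Fin (n + 2)) (τ : Gma (n + 1)) :
    face i (𝟙 _, τ) = push i (𝟙 _, faceG i τ) := by
  simp only [face, push, Category.comp_id, Category.id_comp]

lemma realize_face (K : SSet) (σ : K _⦋n⦌) (i : Fin (j + 2)) (x : ModelSimplex n (j + 1)) :
    (K.δ i (realize K σ x).1, faceG i (realize K σ x).2) = realize K σ (face i x) := by
  simp only [realize, face, SimplicialObject.δ, op_comp, Functor.map_comp_apply]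

lemma realize_push (K : SSet) (σ : K _⦋n + 1⦌) (i : Fin (n + 2)) (x : ModelSimplex n j) :
    realize K σ (push i x) = realize K (K.δ i σ) x := by
  simp only [realize, push, SimplicialObject.δ, op_comp, Functor.map_comp_apply]

lemma realize_id (K : SSet) (σ : K _⦋n⦌) (τ : Gma n) : realize K σ (𝟙 _, τ) = (σ, τ) := by
  simp only [realize, op_id, Functor.map_id_apply]

/-- The cone on `x` with apex the last vertex of `Δ[n]` and the vertex `m` of `Γ`. -/
def cone (m : ℕ) (x : ModelSimplex n j) : ModelSimplex n (j + 1) :=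
  (SimplexCategory.snocLast x.1, x.2.snoc m)

def apex (n m : ℕ) : ModelSimplex n 0 :=
  (SimplexCategory.const _ _ (Fin.last n), Gma.vertex m)

lemma face_last_cone (m : ℕ) (x : ModelSimplex n j) : face (Fin.last (j + 1)) (cone m x) = x := by
  refine Prod.ext (SimplexCategory.Hom.ext _ _ (OrderHom.ext _ _ (funext fun t => ?_)))
    (Subtype.ext (funext fun t => ?_)) <;>
  simp [face, cone, faceG, Gma.snoc, SimplexCategory.snocLast, SimplexCategory.δ]

lemma face_castSucc_cone {m : ℕ} (i : Fin (j + 2)) (x : ModelSimplex n (j + 1))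
    (hm : x.2.1 (Fin.last (j + 1)) < m) :
    face i.castSucc (cone m x) = cone m (face i x) := by
  have hm' : (faceG i x.2).1 (Fin.last j) < m := (x.2.2.monotone (Fin.le_last _)).trans_lt hm
  refine Prod.ext (SimplexCategory.Hom.ext _ _ (OrderHom.ext _ _ (funext fun t => ?_)))
    (Subtype.ext (funext fun t => ?_)) <;>
  induction t using Fin.lastCases <;>
  simp_all [face, cone, faceG, Gma.snoc, SimplexCategory.snocLast, SimplexCategory.δ]

lemma face_zero_cone {m : ℕ} (x : ModelSimplex n 0) (hm : x.2.1 0 < m) :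
    face 0 (cone m x) = apex n m := by
  refine Prod.ext (SimplexCategory.Hom.ext _ _ (OrderHom.ext _ _ (funext fun t => ?_)))
    (Subtype.ext (funext fun t => ?_)) <;>
  fin_cases t <;>
  simp_all [face, cone, apex, faceG, Gma.snoc, Gma.vertex, SimplexCategory.snocLast,
    SimplexCategory.δ, Fin.snoc]

end ModelSimplex

section ModelChain

open ModelSimplex

variable {n j : ℕ}

noncomputable def modelBoundary : ModelChain n (j + 1) →+ ModelChain n j :=
  alternatingFaceSum face

noncomputable def pushChain (i : Fin (n + 2)) : ModelChain n j →+ ModelChain (n + 1) j :=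
  mapDomain.addMonoidHom (push i)

noncomputable def realizeChain (K : SSet) (σ : K _⦋n⦌) :
    ModelChain n j →+ (K _⦋j⦌ × Gma j →₀ ℤ) :=
  mapDomain.addMonoidHom (realize K σ)

lemma modelBoundary_pushChain (i : Fin (n + 2)) (c : ModelChain n (j + 1)) :
    modelBoundary (pushChain i c) = pushChain i (modelBoundary c) :=
  alternatingFaceSum_mapDomain (fun l x => face_push i l x) c

lemma pushChain_pushChain {i l : Fin (n + 2)} (h : i ≤ l) (c : ModelChain n j) :
    pushChain i.castSucc (pushChain l c) = pushChain l.succ (pushChain i c) := by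
  simp only [pushChain, mapDomain.addMonoidHom_apply, ← mapDomain_comp]
  exact mapDomain_congr fun x _ => push_push h x

lemma bdryP_realizeChain (K : SSet) (σ : K _⦋n⦌) (c : ModelChain n (j + 1)) :
    bdryP K j (realizeChain K σ c) = realizeChain K σ (modelBoundary c) := by
  rw [bdryP_eq_alternatingFaceSum]
  exact alternatingFaceSum_mapDomain (fun i x => realize_face K σ i x) c

lemma realizeChain_pushChain (K : SSet) (σ : K _⦋n + 1⦌) (i : Fin (n + 2)) (c : ModelChain n j) :
    realizeChain K σ (pushChain i c) = realizeChain K (K.δ i σ) c := by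
  simp only [realizeChain, pushChain, mapDomain.addMonoidHom_apply, ← mapDomain_comp]
  exact mapDomain_congr fun x _ => realize_push K σ i x

noncomputable def coneChain (m : ℕ) (c : ModelChain n j) : ModelChain n (j + 1) :=
  (-1 : ℤ) ^ (j + 1) • mapDomain (cone m) c

lemma modelBoundary_coneChain_eq (m : ℕ) (c : ModelChain n j) :
    modelBoundary (coneChain m c) = (-1 : ℤ) ^ (j + 1) •
      ∑ i : Fin (j + 1), (-1 : ℤ) ^ (i : ℕ) • mapDomain (face i.castSucc) (mapDomain (cone m) c)
      + c := by
  have hlast : mapDomain (face (Fin.last (j + 1))) (mapDomain (cone m) c) = c := by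
    rw [← mapDomain_comp, show face _ ∘ cone m = id from funext (face_last_cone m),
      mapDomain_id]
  rw [modelBoundary, alternatingFaceSum_apply, Fin.sum_univ_castSucc, Finset.smul_sum]
  simp only [coneChain, mapDomain_smul, hlast, Fin.val_castSucc, Fin.val_last, smul_smul,
    ← pow_add, ← two_mul, pow_mul, neg_one_sq, one_pow, one_smul, add_comm (j + 1)]

lemma modelBoundary_coneChain {m : ℕ} (c : ModelChain n (j + 1))
    (hm : ∀ x ∈ c.support, x.2.1 (Fin.last (j + 1)) < m) :
    modelBoundary (coneChain m c) + coneChain m (modelBoundary c) = c := by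
  have hcast (i : Fin (j + 2)) : mapDomain (face i.castSucc) (mapDomain (cone m) c)
      = mapDomain (cone m) (mapDomain (face i) c) := by
    simp only [← mapDomain_comp]
    exact mapDomain_congr fun x hx => face_castSucc_cone i x (hm x hx)
  rw [modelBoundary_coneChain_eq]
  simp only [hcast, coneChain, modelBoundary, alternatingFaceSum_apply, mapDomain_finsetSum,
    mapDomain_smul, pow_succ _ (j + 1), mul_neg_one, neg_smul]
  abel

lemma modelBoundary_coneChain_zero {m : ℕ} (c : ModelChain n 0)
    (hm : ∀ x ∈ c.support, x.2.1 (Fin.last 0) < m) :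
    modelBoundary (coneChain m c) + (c.sum fun _ a => a) • single (apex n m) 1 = c := by
  have hzero : mapDomain (face 0) (mapDomain (cone m) c)
      = (c.sum fun _ a => a) • single (apex n m) 1 := by
    rw [← mapDomain_comp, mapDomain_congr (f := face 0 ∘ cone m) (g := fun _ => apex n m)
      fun x hx => face_zero_cone x (hm x hx), smul_single_one, mapDomain, single_sum]
  rw [modelBoundary_coneChain_eq, Fin.sum_univ_one, Fin.castSucc_zero, hzero]
  simp only [zero_add, pow_one, Fin.val_zero, pow_zero, one_smul, neg_smul, neg_add_cancel_comm]

noncomputable def freshVertex (c : ModelChain n j) : ℕ :=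
  c.support.sup (fun x => x.2.1 (Fin.last j)) + 1

lemma lt_freshVertex {c : ModelChain n j} {x : ModelSimplex n j} (hx : x ∈ c.support) :
    x.2.1 (Fin.last j) < freshVertex c :=
  Nat.lt_succ_of_le (Finset.le_sup (f := fun x : ModelSimplex n j => x.2.1 (Fin.last j)) hx)

noncomputable def freshCone (c : ModelChain n j) : ModelChain n (j + 1) :=
  coneChain (freshVertex c) c

lemma modelBoundary_freshCone {c : ModelChain n (j + 1)} (hc : modelBoundary c = 0) :
    modelBoundary (freshCone c) = c := by
  simpa only [freshCone, coneChain, hc, mapDomain_zero, smul_zero, add_zero] using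
    modelBoundary_coneChain c fun _ hx => lt_freshVertex hx

lemma modelBoundary_freshCone_zero {c : ModelChain n 0} (hc : c.sum (fun _ a => a) = 0) :
    modelBoundary (freshCone c) = c := by
  have h := modelBoundary_coneChain_zero c fun _ hx => lt_freshVertex hx
  rwa [hc, zero_smul, add_zero] at h

lemma l1_freshCone_le (c : ModelChain n j) : l1 (freshCone c) ≤ l1 c := by
  rw [freshCone, coneChain, l1_neg_one_pow_zsmul]
  exact l1_mapDomain_le _ _

noncomputable def idDiff (τ τ' : Gma n) : ModelChain n n :=
  single (𝟙 _, τ) 1 - single (𝟙 _, τ') 1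

lemma sum_idDiff (τ τ' : Gma n) : (idDiff τ τ').sum (fun _ a => a) = 0 := by
  rw [idDiff, sum_sub_index (fun _ _ _ => rfl), sum_single_index rfl, sum_single_index rfl,
    sub_self]

lemma l1_idDiff_le (τ τ' : Gma n) : l1 (idDiff τ τ') ≤ 2 :=
  (l1_sub_le _ _).trans (by rw [l1_single, l1_single, abs_one]; rfl)

noncomputable def faceSum {m : ℕ} :
    (Gma n → Gma n → ModelChain n m) →+ (Gma (n + 1) → Gma (n + 1) → ModelChain (n + 1) m) :=
  AddMonoidHom.mk'
    (fun h τ τ' => ∑ i : Fin (n + 2), (-1 : ℤ) ^ (i : ℕ) • pushChain i (h (faceG i τ) (faceG i τ')))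
    fun h g => by
      funext τ τ'
      simp only [Pi.add_apply, map_add, smul_add, Finset.sum_add_distrib]

lemma faceSum_apply {m : ℕ} (h : Gma n → Gma n → ModelChain n m) (τ τ' : Gma (n + 1)) :
    faceSum h τ τ'
      = ∑ i : Fin (n + 2), (-1 : ℤ) ^ (i : ℕ) • pushChain i (h (faceG i τ) (faceG i τ')) :=
  rfl

lemma faceSum_faceSum {m : ℕ} (h : Gma n → Gma n → ModelChain n m) :
    faceSum (faceSum h) = 0 := by
  funext τ τ'
  simp only [faceSum_apply, map_sum, map_zsmul, Pi.zero_apply]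
  exact alternating_double_sum_eq_zero _ fun i l hil => by
    rw [faceG_faceG hil, faceG_faceG hil, pushChain_pushChain hil]

lemma modelBoundary_faceSum {m : ℕ} (h : Gma n → Gma n → ModelChain n (m + 1))
    (τ τ' : Gma (n + 1)) :
    modelBoundary (faceSum h τ τ') = faceSum (fun σ σ' => modelBoundary (h σ σ')) τ τ' := by
  simp only [faceSum_apply, map_sum, map_zsmul, modelBoundary_pushChain]

lemma modelBoundary_idDiff (τ τ' : Gma (n + 1)) :
    modelBoundary (idDiff τ τ') = faceSum idDiff τ τ' := by
  simp only [faceSum_apply, idDiff, map_sub, modelBoundary, alternatingFaceSum_apply, pushChain,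
    mapDomain.addMonoidHom_apply, mapDomain_single, face_id, smul_sub, Finset.sum_sub_distrib]

/-- For `n ≥ 1` this is `faceSum (modelHomotopy (n - 1))` (see `faceCorrection_succ`), unfolded
here because `modelHomotopy` is defined from it. -/
noncomputable def faceCorrection (n : ℕ) : Gma n → Gma n → ModelChain n n :=
  match n with
  | 0 => 0
  | n + 1 => faceSum fun σ σ' => freshCone (idDiff σ σ' - faceCorrection n σ σ')

noncomputable def modelHomotopy (n : ℕ) (τ τ' : Gma n) : ModelChain n (n + 1) :=
  freshCone (idDiff τ τ' - faceCorrection n τ τ')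

lemma faceCorrection_zero : faceCorrection 0 = 0 :=
  rfl

lemma faceCorrection_succ (n : ℕ) : faceCorrection (n + 1) = faceSum (modelHomotopy n) :=
  rfl

lemma faceSum_faceCorrection (n : ℕ) : faceSum (faceCorrection n) = 0 := by
  cases n with
  | zero => rw [faceCorrection_zero, map_zero]
  | succ n => rw [faceCorrection_succ, faceSum_faceSum]

theorem modelBoundary_modelHomotopy (n : ℕ) (τ τ' : Gma n) :
    modelBoundary (modelHomotopy n τ τ') = idDiff τ τ' - faceCorrection n τ τ' := by
  induction n with
  | zero =>
    rw [modelHomotopy, faceCorrection_zero, Pi.zero_apply, Pi.zero_apply, sub_zero]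
    exact modelBoundary_freshCone_zero (sum_idDiff τ τ')
  | succ n ih =>
    refine modelBoundary_freshCone ?_
    have hcorr :
        idDiff - (fun σ σ' => modelBoundary (modelHomotopy n σ σ')) = faceCorrection n := by
      funext σ σ'
      simp only [Pi.sub_apply, ih, sub_sub_cancel]
    calc modelBoundary (idDiff τ τ' - faceCorrection (n + 1) τ τ')
        = faceSum (idDiff - fun σ σ' => modelBoundary (modelHomotopy n σ σ')) τ τ' := by
          rw [map_sub, modelBoundary_idDiff, faceCorrection_succ, modelBoundary_faceSum, map_sub]
          rfl
      _ = 0 := by rw [hcorr, faceSum_faceCorrection]; rfl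

def homotopyBound (n : ℕ) : ℕ :=
  match n with
  | 0 => 2
  | n + 1 => 2 + (n + 2) * homotopyBound n

lemma l1_faceSum_le {m : ℕ} (h : Gma n → Gma n → ModelChain n m) {B : ℤ}
    (hB : ∀ σ σ', l1 (h σ σ') ≤ B) (τ τ' : Gma (n + 1)) :
    l1 (faceSum h τ τ') ≤ (n + 2) * B := by
  calc l1 (faceSum h τ τ')
      ≤ ∑ i : Fin (n + 2), l1 (pushChain i (h (faceG i τ) (faceG i τ'))) := by
        rw [faceSum_apply]
        exact (l1_sum_le _ _).trans_eq (by simp only [l1_neg_one_pow_zsmul])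
    _ ≤ ∑ _i : Fin (n + 2), B :=
        Finset.sum_le_sum fun _ _ => (l1_mapDomain_le _ _).trans (hB _ _)
    _ = (n + 2) * B := by simp

theorem l1_modelHomotopy_le (n : ℕ) (τ τ' : Gma n) :
    l1 (modelHomotopy n τ τ') ≤ homotopyBound n := by
  have hcone (n : ℕ) (τ τ' : Gma n) :
      l1 (modelHomotopy n τ τ') ≤ 2 + l1 (faceCorrection n τ τ') :=
    (l1_freshCone_le _).trans <| (l1_sub_le _ _).trans (by gcongr; exact l1_idDiff_le τ τ')
  induction n with
  | zero => simpa [faceCorrection_zero, l1, homotopyBound] using hcone 0 τ τ'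
  | succ n ih =>
    refine (hcone _ τ τ').trans ?_
    rw [faceCorrection_succ, homotopyBound]
    push_cast
    gcongr
    exact l1_faceSum_le _ ih τ τ'

lemma realizeChain_idDiff (K : SSet) (σ : K _⦋n⦌) (τ τ' : Gma n) :
    realizeChain K σ (idDiff τ τ') = single (σ, τ) 1 - single (σ, τ') 1 := by
  simp only [idDiff, realizeChain, map_sub, mapDomain.addMonoidHom_apply, mapDomain_single,
    realize_id]

lemma realizeChain_faceSum (K : SSet) (σ : K _⦋n + 1⦌) {m : ℕ}
    (h : Gma n → Gma n → ModelChain n m) (τ τ' : Gma (n + 1)) :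
    realizeChain K σ (faceSum h τ τ') = ∑ i : Fin (n + 2),
      (-1 : ℤ) ^ (i : ℕ) • realizeChain K (K.δ i σ) (h (faceG i τ) (faceG i τ')) := by
  simp only [faceSum_apply, map_sum, map_zsmul, realizeChain_pushChain]

end ModelChain

/-- There is a function `C : ℕ → ℝ` such that for every simplicial set `K`
there is a family `k_n` assigning to every triple `(σ, τ, τ')` of an `n`-simplex of `K` and
two `n`-simplices of `Γ` an `(n+1)`-chain of `K × Γ` with integer coefficients with
`‖k_n(σ,τ,τ')‖₁ ≤ C n`, `∂ k_0(σ,τ,τ') = (σ,τ) - (σ,τ')`, and for `n ≥ 1`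
`∂ k_n(σ,τ,τ') = (σ,τ) - (σ,τ') - ∑ᵢ (-1)ⁱ k_{n-1}(∂ᵢσ, ∂ᵢτ, ∂ᵢτ')`. -/
theorem exists_bounded_chain_homotopy :
    ∃ C : ℕ → ℝ, ∀ K : SSet,
      ∃ k : ∀ n : ℕ, K _⦋n⦌ → Gma n → Gma n → ((K _⦋n + 1⦌ × Gma (n + 1)) →₀ ℤ),
        (∀ (n : ℕ) (σ : K _⦋n⦌) (τ τ' : Gma n), ((l1 (k n σ τ τ') : ℤ) : ℝ) ≤ C n) ∧
        (∀ (σ : K _⦋0⦌) (τ τ' : Gma 0),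
          bdryP K 0 (k 0 σ τ τ')
            = Finsupp.single (σ, τ) 1 - Finsupp.single (σ, τ') 1) ∧
        (∀ (n : ℕ) (σ : K _⦋n + 1⦌) (τ τ' : Gma (n + 1)),
          bdryP K (n + 1) (k (n + 1) σ τ τ')
            = Finsupp.single (σ, τ) 1 - Finsupp.single (σ, τ') 1
              - ∑ i : Fin (n + 2), ((-1 : ℤ) ^ (i : ℕ)) •
                  k n (K.δ i σ) (faceG i τ) (faceG i τ')) := by
  refine ⟨fun n => homotopyBound n, fun K =>
    ⟨fun n σ τ τ' => realizeChain K σ (modelHomotopy n τ τ'), fun n σ τ τ' => ?_,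
      fun σ τ τ' => ?_, fun n σ τ τ' => ?_⟩⟩
  · have h : l1 (realizeChain K σ (modelHomotopy n τ τ')) ≤ homotopyBound n :=
      (l1_mapDomain_le _ _).trans (l1_modelHomotopy_le n τ τ')
    dsimp only
    exact_mod_cast h
  · rw [bdryP_realizeChain, modelBoundary_modelHomotopy, faceCorrection_zero, Pi.zero_apply,
      Pi.zero_apply, sub_zero, realizeChain_idDiff]
  · rw [bdryP_realizeChain, modelBoundary_modelHomotopy, faceCorrection_succ, map_sub,
      realizeChain_idDiff, realizeChain_faceSum]
end

section
/- (Eilenberg–Zilber lemma) Let K be a simplicial set and σ an n-simplex of K. Then there exist a unique m ∈ ℕ, a unique surjective monotone map θ : [n] → [m] in the simplex category, and a unique nondegenerate m-simplex τ of K such that σ = θ*(τ), where θ*(τ) = K.map(θ.op)(τ). -/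
open CategoryTheory Simplicial

/-- A simplex of a simplicial set is degenerate if it is the image of a simplex of strictly
smaller dimension under a surjective structure map (equivalently, if it lies in the image of
some degeneracy operator). -/
def IsDegen (K : SSet) {l : ℕ} (τ : K _⦋l⦌) : Prop :=
  ∃ (m : ℕ) (θ : SimplexCategory.mk l ⟶ SimplexCategory.mk m) (τ' : K _⦋m⦌),
    m < l ∧ Function.Surjective ⇑θ.toOrderHom ∧ τ = K.map θ.op τ'

lemma isDegen_iff_mem_degenerate (K : SSet) {n : ℕ} (x : K _⦋n⦌) :
    IsDegen K x ↔ x ∈ K.degenerate n := by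
  simp only [SSet.mem_degenerate_iff, SimplexCategory.epi_iff_surjective]
  constructor
  · rintro ⟨m, θ, y, hm, hθ, rfl⟩
    exact ⟨m, hm, θ, hθ, y, rfl⟩
  · rintro ⟨m, hm, θ, hθ, y, rfl⟩
    exact ⟨m, θ, y, hm, hθ, rfl⟩

lemma not_isDegen_iff_mem_nonDegenerate (K : SSet) {n : ℕ} (x : K _⦋n⦌) :
    ¬ IsDegen K x ↔ x ∈ K.nonDegenerate n :=
  (isDegen_iff_mem_degenerate K x).not

/-- **Eilenberg–Zilber lemma.** Every `n`-simplex `σ` of a simplicial set `K`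
admits a unique presentation `σ = θ*(τ)` with `θ : [n] → [m]` a surjective monotone map and
`τ` a nondegenerate `m`-simplex. -/
theorem eilenberg_zilber (K : SSet) (n : ℕ) (σ : K _⦋n⦌) :
    ∃! p : Σ m : ℕ, (SimplexCategory.mk n ⟶ SimplexCategory.mk m) × K _⦋m⦌,
      Function.Surjective ⇑p.2.1.toOrderHom ∧ ¬ IsDegen K p.2.2 ∧ σ = K.map p.2.1.op p.2.2 := by
  simp only [← SimplexCategory.epi_iff_surjective, not_isDegen_iff_mem_nonDegenerate]
  obtain ⟨m, θ, hθ, ⟨τ, hτ⟩, hσ⟩ := K.exists_nonDegenerate σ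
  refine ⟨⟨m, θ, τ⟩, ⟨hθ, hτ, hσ⟩, ?_⟩
  rintro ⟨m', θ', τ'⟩ ⟨hθ', hτ', hσ'⟩
  obtain rfl : m' = m := K.unique_nonDegenerate_dim σ θ' ⟨τ', hτ'⟩ hσ' θ ⟨τ, hτ⟩ hσ
  have hτ_eq : τ' = τ := congrArg Subtype.val
    (K.unique_nonDegenerate_simplex σ θ' ⟨τ', hτ'⟩ hσ' θ ⟨τ, hτ⟩ hσ)
  have hθ_eq : θ' = θ := K.unique_nonDegenerate_map σ θ' ⟨τ', hτ'⟩ hσ' θ ⟨τ, hτ⟩ hσ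
  subst hτ_eq hθ_eq
  rfl
end

section
/- Let K be a simplicial set with nondegenerate core, i.e. such that every face ∂_i τ of every nondegenerate simplex τ of K is nondegenerate. For each q ∈ ℕ let X_q be the set of pairs (τ, ρ) where τ is a nondegenerate l-simplex of K for some l ∈ ℕ and ρ : [q] → [l] is a surjective monotone map; for every monotone θ : [m] → [q] define θ*(τ, ρ) = (α*(τ), β), where ρ ∘ θ = α ∘ β is the unique factorization of ρ ∘ θ into a surjective monotone map β : [m] → [k] followed by an injective monotone map α : [k] → [l] (the simplex α*(τ) = K.map(α.op)(τ) is nondegenerate by the core hypothesis). Then these data define a simplicial set X (the structure maps satisfy (θ ∘ η)* = η* ∘ θ* and identities act as identities), and the map Θ : X → K given by Θ(τ, ρ) = ρ*(τ) = K.map(ρ.op)(τ) is an isomorphism of simplicial sets. -/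
/-!
Every simplex of `K` is `ρ*(τ)` for a unique nondegenerate `τ` and surjective `ρ`
(Eilenberg–Zilber), so `Θ` is bijective in each degree. The core hypothesis makes
`α*(τ)` nondegenerate for every injective `α`, so `θ*` is well defined; `Θ` commutes
with it because `ρ ∘ θ = α ∘ β`, and the simplicial identities for `θ*` are transported
from `K` along the injective `Θ`.
-/

open CategoryTheory Simplicial

/-- The `q`-simplices of the simplicial set `𝚫 core(K)` built from the core of `K`:
pairs `(τ, ρ)` of a nondegenerate `l`-simplex `τ` of `K` (for some `l`) and a surjective
monotone map `ρ : [q] → [l]`. -/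
abbrev CoreObj (K : SSet) (q : ℕ) : Type _ :=
  {p : Σ l : ℕ, K.obj (Opposite.op (SimplexCategory.mk l)) ×
      (SimplexCategory.mk q ⟶ SimplexCategory.mk l) //
    ¬ IsDegen K p.2.1 ∧ Function.Surjective ⇑p.2.2.toOrderHom}

open SimplexCategory Limits

namespace SSet

theorem not_isDegen_iff (K : SSet) {l : ℕ} (τ : K _⦋l⦌) :
    ¬ IsDegen K τ ↔ τ ∈ K.nonDegenerate l := by
  rw [mem_nonDegenerate_iff_notMem_degenerate, mem_degenerate_iff, not_iff_not]
  constructor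
  · rintro ⟨m, θ, τ', hm, hθ, rfl⟩
    exact ⟨m, hm, θ, epi_iff_surjective.2 hθ, τ', rfl⟩
  · rintro ⟨m, hm, θ, hθ, τ', rfl⟩
    exact ⟨m, θ, τ', hm, epi_iff_surjective.1 hθ, rfl⟩

/-- Every non-surjective monomorphism of `SimplexCategory` factors through a coface map,
so a nondegenerate core is closed under all injective structure maps. -/
theorem map_mem_nonDegenerate_of_mono {K : SSet}
    (hcore : ∀ (l : ℕ) (τ : K _⦋l + 1⦌), τ ∈ K.nonDegenerate (l + 1) →
      ∀ i : Fin (l + 2), K.δ i τ ∈ K.nonDegenerate l)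
    {k l : ℕ} (α : ⦋k⦌ ⟶ ⦋l⦌) [Mono α] {τ : K _⦋l⦌} (hτ : τ ∈ K.nonDegenerate l) :
    K.map α.op τ ∈ K.nonDegenerate k := by
  induction l with
  | zero =>
    obtain rfl : k = 0 := by simpa using len_le_of_mono α
    simp
  | succ l ih =>
    by_cases hα : Function.Surjective α.toOrderHom
    · have : Epi α := epi_iff_surjective.2 hα
      obtain rfl : k = l + 1 := le_antisymm (len_le_of_mono α) (len_le_of_epi α)
      simpa [eq_id_of_mono α] using hτ
    · obtain ⟨i, α', rfl⟩ := eq_comp_δ_of_not_surjective α hα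
      have : Mono α' := mono_of_mono α' (δ i)
      rw [op_comp, Functor.map_comp_apply]
      exact ih α' (hcore l τ hτ i)

end SSet

namespace CoreObj

variable {K : SSet}

/-- The map `Θ(τ, ρ) = ρ*(τ)`. -/
def toSimplex {q : ℕ} (p : CoreObj K q) : K _⦋q⦌ := K.map p.1.2.2.op p.1.2.1

theorem toSimplex_surjective (q : ℕ) :
    Function.Surjective (toSimplex : CoreObj K q → K _⦋q⦌) := by
  intro x
  obtain ⟨l, ρ, hρ, ⟨τ, hτ⟩, rfl⟩ := K.exists_nonDegenerate x
  exact ⟨⟨⟨l, τ, ρ⟩, (K.not_isDegen_iff τ).2 hτ, epi_iff_surjective.1 hρ⟩, rfl⟩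

theorem toSimplex_injective (q : ℕ) :
    Function.Injective (toSimplex : CoreObj K q → K _⦋q⦌) := by
  rintro ⟨⟨l, τ, ρ⟩, hτ, hρ⟩ ⟨⟨l', τ', ρ'⟩, hτ', hρ'⟩ h
  change K.map ρ.op τ = K.map ρ'.op τ' at h
  rw [K.not_isDegen_iff] at hτ hτ'
  have := epi_iff_surjective.2 hρ
  have := epi_iff_surjective.2 hρ'
  obtain rfl := K.unique_nonDegenerate_dim _ ρ ⟨τ, hτ⟩ rfl ρ' ⟨τ', hτ'⟩ h
  obtain rfl := K.unique_nonDegenerate_map _ ρ ⟨τ, hτ⟩ rfl ρ' ⟨τ', hτ'⟩ h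
  obtain rfl : τ = τ' :=
    congrArg Subtype.val (K.unique_nonDegenerate_simplex _ ρ ⟨τ, hτ⟩ rfl ρ ⟨τ', hτ'⟩ h)
  rfl

variable (hcore : ∀ (l : ℕ) (τ : K _⦋l + 1⦌), τ ∈ K.nonDegenerate (l + 1) →
    ∀ i : Fin (l + 2), K.δ i τ ∈ K.nonDegenerate l)

/-- `θ*(τ, ρ) = (α*(τ), β)`, where `ρ ∘ θ = α ∘ β` is the image factorization. -/
noncomputable def pullback {m q : ℕ} (θ : ⦋m⦌ ⟶ ⦋q⦌) (p : CoreObj K q) : CoreObj K m :=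
  ⟨⟨(image (θ ≫ p.1.2.2)).len, K.map (image.ι (θ ≫ p.1.2.2)).op p.1.2.1,
      factorThruImage (θ ≫ p.1.2.2)⟩,
    (K.not_isDegen_iff _).2
      (SSet.map_mem_nonDegenerate_of_mono hcore _ ((K.not_isDegen_iff _).1 p.2.1)),
    epi_iff_surjective.1 inferInstance⟩

theorem toSimplex_pullback {m q : ℕ} (θ : ⦋m⦌ ⟶ ⦋q⦌) (p : CoreObj K q) :
    toSimplex (pullback hcore θ p) = K.map θ.op (toSimplex p) := by
  change K.map (factorThruImage (θ ≫ p.1.2.2)).op (K.map (image.ι (θ ≫ p.1.2.2)).op p.1.2.1) =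
    K.map θ.op (K.map p.1.2.2.op p.1.2.1)
  rw [← Functor.map_comp_apply, ← Functor.map_comp_apply, ← op_comp, ← op_comp, image.fac]

end CoreObj

open CoreObj

/-- If `K` has nondegenerate core (all faces of nondegenerate simplices
are nondegenerate), then the pairs `(τ, ρ)` of a nondegenerate simplex and a surjective
monotone map form a simplicial set, with structure maps `θ*(τ, ρ) = (α*(τ), β)` given by the
unique surjective/injective factorization `ρ ∘ θ = α ∘ β`, and the canonical map
`Θ(τ, ρ) = ρ*(τ)` is an isomorphism of simplicial sets onto `K` (a natural bijection in
every degree). -/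
theorem core_reconstruction (K : SSet)
    (hcore : ∀ (l : ℕ) (τ : K _⦋l + 1⦌), ¬ IsDegen K τ →
      ∀ i : Fin (l + 2), ¬ IsDegen K (K.δ i τ)) :
    ∃ Xmap : ∀ (m q : ℕ), (SimplexCategory.mk m ⟶ SimplexCategory.mk q) →
        CoreObj K q → CoreObj K m,
      -- the structure maps are given by the epi-mono factorization:
      -- `θ*(τ, ρ) = (α*(τ), β)` where `ρ ∘ θ = α ∘ β`, `β` surjective, `α` injective
      (∀ (m q : ℕ) (θ : SimplexCategory.mk m ⟶ SimplexCategory.mk q) (p : CoreObj K q),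
        ∃ (kk : ℕ) (β : SimplexCategory.mk m ⟶ SimplexCategory.mk kk)
          (α : SimplexCategory.mk kk ⟶ SimplexCategory.mk p.1.1),
          Function.Surjective ⇑β.toOrderHom ∧ Function.Injective ⇑α.toOrderHom ∧
          θ ≫ p.1.2.2 = β ≫ α ∧
          ∃ h : ¬ IsDegen K (K.map α.op p.1.2.1) ∧ Function.Surjective ⇑β.toOrderHom,
            Xmap m q θ p = ⟨⟨kk, (K.map α.op p.1.2.1, β)⟩, h⟩) ∧
      -- identities act as identities
      (∀ (q : ℕ) (p : CoreObj K q), Xmap q q (𝟙 _) p = p) ∧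
      -- `(θ ∘ η)* = η* ∘ θ*`
      (∀ (m m' q : ℕ) (η : SimplexCategory.mk m ⟶ SimplexCategory.mk m')
          (θ : SimplexCategory.mk m' ⟶ SimplexCategory.mk q) (p : CoreObj K q),
        Xmap m q (η ≫ θ) p = Xmap m m' η (Xmap m' q θ p)) ∧
      -- `Θ(τ, ρ) = ρ*(τ)` is bijective in every degree
      (∀ q : ℕ, Function.Bijective fun p : CoreObj K q => K.map p.1.2.2.op p.1.2.1) ∧
      -- and `Θ` is a simplicial map
      (∀ (m q : ℕ) (θ : SimplexCategory.mk m ⟶ SimplexCategory.mk q) (p : CoreObj K q),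
        K.map θ.op (K.map p.1.2.2.op p.1.2.1)
          = K.map (Xmap m q θ p).1.2.2.op (Xmap m q θ p).1.2.1) := by
  have hcore' : ∀ (l : ℕ) (τ : K _⦋l + 1⦌), τ ∈ K.nonDegenerate (l + 1) →
      ∀ i : Fin (l + 2), K.δ i τ ∈ K.nonDegenerate l := by
    simpa only [SSet.not_isDegen_iff] using hcore
  refine ⟨fun m q θ p => pullback hcore' θ p, ?_, ?_, ?_, ?_, ?_⟩
  · intro m q θ p
    exact ⟨_, factorThruImage (θ ≫ p.1.2.2), image.ι (θ ≫ p.1.2.2),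
      epi_iff_surjective.1 inferInstance, mono_iff_injective.1 inferInstance,
      (image.fac _).symm, _, rfl⟩
  · intro q p
    apply toSimplex_injective
    rw [toSimplex_pullback, op_id, Functor.map_id_apply]
  · intro m m' q η θ p
    apply toSimplex_injective
    simp only [toSimplex_pullback, op_comp, Functor.map_comp_apply]
  · exact fun q => ⟨toSimplex_injective q, toSimplex_surjective q⟩
  · exact fun m q θ p => (toSimplex_pullback hcore' θ p).symm
end
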